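/- arXiv:2105.05199 — 4 statements merged into one kernel-verified Lean document; each statement's English description precedes it below -/
import Mathlib

section
/- For any graph G with no isolated vertex and any nontrivial graph H, there exists a minimum-weight secure (1,0)-dominating function f on the lexicographic product G∘H such that for every vertex u of G, the sum of f over the copy H_u = {u}×V(H) is at most 2. -/
/-!
For `w = (1, 0)` a `w`-dominating function takes only the values `0` and `1`; it is the indicator
of a dominating set, and it is secure exactly when that set is a secure dominating set.

Let `S` be a secure dominating set of `G ∘ H` with at least three vertices in a copy `H_u`, let
`r` be one of them and `x` a neighbour of `u` in `G`. If `S` has at least two vertices in `H_x`,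
then `S \ {r}` is still secure dominating; otherwise, `H` being nontrivial, `H_x` has a vertex `c`
outside `S`, and `(S \ {r}) ∪ {c}` is secure dominating. In both cases the vertices of `S` left in
`H_u` and `H_x` take over the defence of every vertex that `r` used to dominate. Neither move
increases `|S|`, and both decrease `∑ u, (|S ∩ H_u| - 2)` (truncated subtraction), so starting
from a minimum secure dominating set we reach one with at most two vertices in every copy.
-/

namespace SecureW

open Finset

/-- Lexicographic product of simple graphs. -/
def lexProd {α β : Type*} (G : SimpleGraph α) (H : SimpleGraph β) :
    SimpleGraph (α × β) where
  Adj p q := G.Adj p.1 q.1 ∨ (p.1 = q.1 ∧ H.Adj p.2 q.2)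
  symm := by
    constructor
    rintro p q (h | ⟨h1, h2⟩)
    · exact Or.inl h.symm
    · exact Or.inr ⟨h1.symm, h2.symm⟩
  loopless := by
    constructor
    rintro p (h | ⟨_, h⟩)
    · exact G.irrefl h
    · exact H.irrefl h

open scoped Classical in
/-- Sum of `f` over the open neighbourhood of `v`. -/
noncomputable def nbrSum {V : Type*} [Fintype V] (G : SimpleGraph V) (f : V → ℕ) (v : V) : ℕ :=
  ∑ u ∈ Finset.univ.filter (fun u => G.Adj v u), f u

/-- `f` is a `w`-dominating function, where `w` is given as a list `(w_0, …, w_l)`. -/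
def IsWDom {V : Type*} [Fintype V] (G : SimpleGraph V) (ws : List ℕ) (f : V → ℕ) : Prop :=
  (∀ v, f v < ws.length) ∧ ∀ v, ws.getD (f v) 0 ≤ nbrSum G f v

/-- The function obtained from `f` by moving one unit of weight from `u` to `v`. -/
def move {V : Type*} [DecidableEq V] (f : V → ℕ) (u v : V) : V → ℕ :=
  fun x => if x = v then 1 else if x = u then f u - 1 else f x

open scoped Classical in
/-- `f` is a secure `w`-dominating function. -/
def IsSecureWDom {V : Type*} [Fintype V] (G : SimpleGraph V) (ws : List ℕ) (f : V → ℕ) : Prop :=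
  IsWDom G ws f ∧ ∀ v, f v = 0 → ∃ u, G.Adj v u ∧ 0 < f u ∧ IsWDom G ws (move f u v)

/-- The weight of a function. -/
noncomputable def weight {V : Type*} [Fintype V] (f : V → ℕ) : ℕ := ∑ v, f v

/-- The `w`-domination number. -/
noncomputable def wDomNum {V : Type*} [Fintype V] (G : SimpleGraph V) (ws : List ℕ) : ℕ :=
  sInf {k | ∃ f, IsWDom G ws f ∧ weight f = k}

/-- The secure `w`-domination number. -/
noncomputable def secWDomNum {V : Type*} [Fintype V] (G : SimpleGraph V) (ws : List ℕ) : ℕ :=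
  sInf {k | ∃ f, IsSecureWDom G ws f ∧ weight f = k}

/-- The (ordinary) domination number, as `γ_{(1,0)}`. -/
noncomputable def domNum {V : Type*} [Fintype V] (G : SimpleGraph V) : ℕ :=
  wDomNum G [1, 0]

/-- `G` has no isolated vertex. -/
def NoIsolated {V : Type*} (G : SimpleGraph V) : Prop := ∀ v, ∃ u, G.Adj v u

end SecureW

namespace SecureW

open Finset

section DominatingSet

variable {V : Type*} (G : SimpleGraph V)

def Dominates (D : Finset V) (p : V) : Prop := p ∈ D ∨ ∃ w ∈ D, G.Adj p w

def IsDominatingSet (D : Finset V) : Prop := ∀ p, Dominates G D p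

def IsSecureDominatingSet [DecidableEq V] (D : Finset V) : Prop :=
  IsDominatingSet G D ∧ ∀ v ∉ D, ∃ w ∈ D, G.Adj v w ∧ IsDominatingSet G (insert v (D.erase w))

end DominatingSet

section Indicator

variable {V : Type*} [DecidableEq V]

def indicatorOne (D : Finset V) : V → ℕ := fun v => if v ∈ D then 1 else 0

lemma move_indicatorOne (D : Finset V) (w v : V) :
    move (indicatorOne D) w v = indicatorOne (insert v (D.erase w)) := by
  funext x
  simp only [move, indicatorOne, mem_insert, mem_erase]
  by_cases hxv : x = v <;> by_cases hxw : x = w <;> simp_all; split_ifs <;> rfl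

variable [Fintype V] (G : SimpleGraph V)

lemma weight_indicatorOne (D : Finset V) : weight (indicatorOne D) = #D := by
  simp [weight, indicatorOne]

lemma nbrSum_indicatorOne_pos_iff (D : Finset V) (v : V) :
    0 < nbrSum G (indicatorOne D) v ↔ ∃ w ∈ D, G.Adj v w := by
  classical
  simp [nbrSum, indicatorOne, card_pos, Finset.Nonempty, and_comm]

lemma isWDom_indicatorOne_iff (D : Finset V) :
    IsWDom G [1, 0] (indicatorOne D) ↔ IsDominatingSet G D := by
  refine ⟨fun h p => ?_, fun h => ⟨fun v => ?_, fun v => ?_⟩⟩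
  · by_cases hp : p ∈ D
    · exact Or.inl hp
    · have := h.2 p
      simp only [indicatorOne, hp, if_false, List.getD_cons_zero] at this
      exact Or.inr ((nbrSum_indicatorOne_pos_iff G D p).1 this)
  · unfold indicatorOne; split_ifs <;> simp
  · by_cases hv : v ∈ D
    · simp [indicatorOne, hv]
    · have h0 : indicatorOne D v = 0 := if_neg hv
      rw [h0]
      exact (nbrSum_indicatorOne_pos_iff G D v).2 ((h v).resolve_left hv)

lemma isSecureWDom_indicatorOne_iff (D : Finset V) :
    IsSecureWDom G [1, 0] (indicatorOne D) ↔ IsSecureDominatingSet G D := by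
  unfold IsSecureWDom
  rw [isWDom_indicatorOne_iff]
  -- `IsSecureWDom` applies `move` with the classical `DecidableEq` instance.
  obtain rfl : ‹DecidableEq V› = fun a b => Classical.propDecidable (a = b) :=
    Subsingleton.elim _ _
  simp only [move_indicatorOne, isWDom_indicatorOne_iff]
  simp [IsSecureDominatingSet, indicatorOne, and_left_comm, Nat.pos_iff_ne_zero]

lemma eq_indicatorOne_of_isWDom {f : V → ℕ} (hf : IsWDom G [1, 0] f) :
    f = indicatorOne {v | f v ≠ 0} := by
  funext v
  have := hf.1 v
  simp only [List.length_cons, List.length_nil] at this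
  simp only [indicatorOne, mem_filter, mem_univ, true_and]
  split_ifs <;> omega

lemma secWDomNum_le_card {S : Finset V} (hS : IsSecureDominatingSet G S) :
    secWDomNum G [1, 0] ≤ #S :=
  Nat.sInf_le ⟨indicatorOne S, (isSecureWDom_indicatorOne_iff G S).2 hS, weight_indicatorOne S⟩

lemma exists_isSecureDominatingSet_card_eq_secWDomNum :
    ∃ S : Finset V, IsSecureDominatingSet G S ∧ #S = secWDomNum G [1, 0] := by
  have huniv : IsSecureDominatingSet G univ :=
    ⟨fun p => Or.inl (mem_univ p), fun v hv => absurd (mem_univ v) hv⟩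
  obtain ⟨f, hf, hwf⟩ := Nat.sInf_mem (⟨_, indicatorOne univ,
    (isSecureWDom_indicatorOne_iff G univ).2 huniv, rfl⟩ :
      {k | ∃ f, IsSecureWDom G [1, 0] f ∧ weight f = k}.Nonempty)
  have hf₁ := eq_indicatorOne_of_isWDom G hf.1
  rw [hf₁] at hf hwf
  exact ⟨_, (isSecureWDom_indicatorOne_iff G _).1 hf, (weight_indicatorOne _).symm.trans hwf⟩

end Indicator

lemma card_insert_erase_le {V : Type*} [DecidableEq V] {S : Finset V} {r : V} (hr : r ∈ S)
    (c : V) : #(insert c (S.erase r)) ≤ #S := by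
  have := card_insert_le c (S.erase r)
  have := card_erase_add_one hr
  omega

section LexProd

variable {α β : Type*} {G : SimpleGraph α} {H : SimpleGraph β}

lemma lexProd_adj_of_adj_fst {p t : α × β} (h : G.Adj p.1 t.1) : (lexProd G H).Adj p t :=
  Or.inl h

lemma adj_fst_of_lexProd_adj {p t : α × β} (h : (lexProd G H).Adj p t) (hne : p.1 ≠ t.1) :
    G.Adj p.1 t.1 :=
  h.resolve_right fun h' => hne h'.1

lemma dominates_of_adj_fst {D : Finset (α × β)} {p a : α × β} (ha : a ∈ D) (h : G.Adj p.1 a.1) :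
    Dominates (lexProd G H) D p :=
  Or.inr ⟨a, ha, lexProd_adj_of_adj_fst h⟩

/-- A vertex outside a copy `H_u` is adjacent to all of `H_u` or to none of it. -/
lemma Dominates.of_forall_mem_or_mem_copy {D D' : Finset (α × β)} {p : α × β}
    (hp : Dominates (lexProd G H) D' p)
    (h : ∀ w ∈ D', w ∈ D ∨ w.1 ≠ p.1 ∧ ∃ a ∈ D, a.1 = w.1) : Dominates (lexProd G H) D p := by
  rcases hp with hp | ⟨w, hw, hpw⟩
  · exact (h p hp).imp_right fun h' => absurd rfl h'.1
  · rcases h w hw with hw' | ⟨hne, a, ha, haw⟩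
    · exact Or.inr ⟨w, hw', hpw⟩
    · exact dominates_of_adj_fst ha (haw ▸ adj_fst_of_lexProd_adj hpw hne.symm)

variable [DecidableEq α]

lemma exists_mem_fst_eq_ne {S : Finset (α × β)} {u : α} (h : 1 < #{p ∈ S | p.1 = u})
    (b : α × β) : ∃ a ∈ S, a.1 = u ∧ a ≠ b := by
  obtain ⟨a, ha, hab⟩ := exists_mem_ne h b
  rw [mem_filter] at ha
  exact ⟨a, ha.1, ha.2, hab⟩

lemma exists_mk_notMem_of_card_le_one [Nontrivial β] {S : Finset (α × β)} {x : α}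
    (h : #{p ∈ S | p.1 = x} ≤ 1) : ∃ y, (x, y) ∉ S := by
  by_contra! hall
  obtain ⟨y₁, y₂, hy⟩ := exists_pair_ne β
  have : 1 < #{p ∈ S | p.1 = x} :=
    one_lt_card.2 ⟨(x, y₁), by simp [hall], (x, y₂), by simp [hall], by simp [hy]⟩
  omega

variable [DecidableEq β]

lemma exists_mem_fst_eq_ne_ne {S : Finset (α × β)} {u : α} (h : 2 < #{p ∈ S | p.1 = u})
    (b c : α × β) : ∃ a ∈ S, a.1 = u ∧ a ≠ b ∧ a ≠ c := by
  have : 0 < #(({p ∈ S | p.1 = u}.erase b).erase c) :=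
    calc 0 < #{p ∈ S | p.1 = u} - 1 - 1 := by omega
      _ ≤ #({p ∈ S | p.1 = u}.erase b) - 1 := Nat.sub_le_sub_right (pred_card_le_card_erase) 1
      _ ≤ _ := pred_card_le_card_erase
  obtain ⟨a, ha⟩ := card_pos.1 this
  simp only [mem_erase, mem_filter] at ha
  exact ⟨a, ha.2.2.1, ha.2.2.2, ha.2.1, ha.1⟩

lemma sum_indicatorOne_mk [Fintype β] (T : Finset (α × β)) (u : α) :
    ∑ y, indicatorOne T (u, y) = #{p ∈ T | p.1 = u} := by
  simp only [indicatorOne, sum_boole, Nat.cast_id]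
  refine card_nbij' (fun y => (u, y)) Prod.snd ?_ ?_ (fun _ _ => rfl) ?_
  · intro y hy
    simpa using hy
  · rintro ⟨a, y⟩ h
    obtain ⟨h, rfl⟩ : (a, y) ∈ T ∧ a = u := by simpa using h
    simpa using h
  · rintro ⟨a, y⟩ h
    obtain ⟨-, rfl⟩ : (a, y) ∈ T ∧ a = u := by simpa using h
    rfl

lemma isDominatingSet_of_erase_subset {S T : Finset (α × β)} {r a : α × β}
    (hS : IsDominatingSet (lexProd G H) S) (hr : 1 < #{p ∈ S | p.1 = r.1})
    (hST : S.erase r ⊆ T) (ha : a ∈ T) (hra : G.Adj r.1 a.1) :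
    IsDominatingSet (lexProd G H) T := by
  intro p
  by_cases hp : p.1 = r.1
  · exact dominates_of_adj_fst ha (hp ▸ hra)
  obtain ⟨b, hb, hb1, hbr⟩ := exists_mem_fst_eq_ne hr r
  refine (hS p).of_forall_mem_or_mem_copy fun w hw => ?_
  by_cases hwr : w = r
  · subst hwr
    exact Or.inr ⟨Ne.symm hp, b, hST (mem_erase.2 ⟨hbr, hb⟩), hb1⟩
  · exact Or.inl (hST (mem_erase.2 ⟨hwr, hw⟩))

lemma exists_defender_of_fst_ne {S T : Finset (α × β)} {r v : α × β} {x : α}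
    (hS : IsSecureDominatingSet (lexProd G H) S) (hr : 2 < #{p ∈ S | p.1 = r.1})
    (hST : S.erase r ⊆ T) (hx : G.Adj r.1 x) (hxT : ∀ b ∈ S, ∃ a ∈ T.erase b, a.1 = x)
    (hvT : v ∉ T) (hv : v.1 ≠ r.1) :
    ∃ w ∈ T, (lexProd G H).Adj v w ∧ IsDominatingSet (lexProd G H) (insert v (T.erase w)) := by
  have hvS : v ∉ S := fun h => hvT (hST (mem_erase.2 ⟨fun e => hv (e ▸ rfl), h⟩))
  obtain ⟨t, ht, hvt, hN⟩ := hS.2 v hvS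
  by_cases ht1 : t.1 = r.1
  · obtain ⟨s, hs, hs1, hsr, -⟩ := exists_mem_fst_eq_ne_ne hr r r
    have hvs : G.Adj v.1 s.1 := hs1 ▸ ht1 ▸ adj_fst_of_lexProd_adj hvt (ht1 ▸ hv)
    refine ⟨s, hST (mem_erase.2 ⟨hsr, hs⟩), lexProd_adj_of_adj_fst hvs, fun p => ?_⟩
    by_cases hp : p.1 = r.1
    · obtain ⟨a, ha, ha1⟩ := hxT s hs
      exact dominates_of_adj_fst (mem_insert_of_mem ha) (by rw [hp, ha1]; exact hx)
    obtain ⟨b, hb, hb1, hbr, hbs⟩ := exists_mem_fst_eq_ne_ne hr r s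
    refine (hS.1 p).of_forall_mem_or_mem_copy fun w hw => ?_
    by_cases hw' : w = r ∨ w = s
    · have hw1 : w.1 = r.1 := by rcases hw' with rfl | rfl; exacts [rfl, hs1]
      exact Or.inr ⟨hw1 ▸ Ne.symm hp, b,
        mem_insert_of_mem (mem_erase.2 ⟨hbs, hST (mem_erase.2 ⟨hbr, hb⟩)⟩), hb1.trans hw1.symm⟩
    · push Not at hw'
      exact Or.inl (mem_insert_of_mem (mem_erase.2 ⟨hw'.2, hST (mem_erase.2 ⟨hw'.1, hw⟩)⟩))
  · have htr : t ≠ r := fun h => ht1 (h ▸ rfl)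
    refine ⟨t, hST (mem_erase.2 ⟨htr, ht⟩), hvt, fun p => ?_⟩
    by_cases hp : p.1 = r.1
    · obtain ⟨a, ha, ha1⟩ := hxT t ht
      exact dominates_of_adj_fst (mem_insert_of_mem ha) (by rw [hp, ha1]; exact hx)
    obtain ⟨b, hb, hb1, hbr, hbt⟩ := exists_mem_fst_eq_ne_ne hr r t
    refine (hN p).of_forall_mem_or_mem_copy fun w hw => ?_
    by_cases hwr : w = r
    · subst hwr
      exact Or.inr ⟨Ne.symm hp, b,
        mem_insert_of_mem (mem_erase.2 ⟨hbt, hST (mem_erase.2 ⟨hbr, hb⟩)⟩), hb1⟩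
    · left
      rw [mem_insert, mem_erase] at hw ⊢
      exact hw.imp_right fun h => ⟨h.1, hST (mem_erase.2 ⟨hwr, h.2⟩)⟩

lemma isSecureDominatingSet_erase {S : Finset (α × β)} {r : α × β} {x : α}
    (hS : IsSecureDominatingSet (lexProd G H) S) (hr : 2 < #{p ∈ S | p.1 = r.1})
    (hx : G.Adj r.1 x) (hx2 : 1 < #{p ∈ S | p.1 = x}) :
    IsSecureDominatingSet (lexProd G H) (S.erase r) := by
  have hxT : ∀ b ∈ S, ∃ a ∈ (S.erase r).erase b, a.1 = x := fun b _ => by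
    obtain ⟨a, ha, ha1, hab⟩ := exists_mem_fst_eq_ne hx2 b
    have har : a ≠ r := fun h => hx.ne (by rw [← ha1, h])
    exact ⟨a, mem_erase.2 ⟨hab, mem_erase.2 ⟨har, ha⟩⟩, ha1⟩
  obtain ⟨a₀, ha₀, ha₀1, ha₀r⟩ := exists_mem_fst_eq_ne hx2 r
  have ha₀T : a₀ ∈ S.erase r := mem_erase.2 ⟨ha₀r, ha₀⟩
  refine ⟨isDominatingSet_of_erase_subset hS.1 (by omega) subset_rfl ha₀T (ha₀1 ▸ hx),
    fun v hvT => ?_⟩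
  by_cases hv : v.1 = r.1
  swap
  · exact exists_defender_of_fst_ne hS hr subset_rfl hx hxT hvT hv
  refine ⟨a₀, ha₀T, lexProd_adj_of_adj_fst (by rw [hv, ha₀1]; exact hx), fun p => ?_⟩
  obtain ⟨a, ha, ha1⟩ := hxT a₀ ha₀
  by_cases hpr : p.1 = r.1
  · exact dominates_of_adj_fst (mem_insert_of_mem ha) (by rw [hpr, ha1]; exact hx)
  by_cases hpx : p.1 = x
  · exact dominates_of_adj_fst (mem_insert_self v _) (by rw [hpx, hv]; exact hx.symm)
  refine (hS.1 p).of_forall_mem_or_mem_copy fun w hw => ?_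
  by_cases hwr : w = r
  · subst hwr
    exact Or.inr ⟨Ne.symm hpr, v, mem_insert_self v _, hv⟩
  by_cases hwa : w = a₀
  · subst hwa
    exact Or.inr ⟨by rw [ha₀1]; exact Ne.symm hpx, a, mem_insert_of_mem ha, ha1.trans ha₀1.symm⟩
  exact Or.inl (mem_insert_of_mem (mem_erase.2 ⟨hwa, mem_erase.2 ⟨hwr, hw⟩⟩))

lemma isSecureDominatingSet_insert_erase {S : Finset (α × β)} {r c : α × β}
    (hS : IsSecureDominatingSet (lexProd G H) S) (hr : 2 < #{p ∈ S | p.1 = r.1}) (hrS : r ∈ S)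
    (hc : c ∉ S) (hrc : G.Adj r.1 c.1) :
    IsSecureDominatingSet (lexProd G H) (insert c (S.erase r)) := by
  have hcS : c ∉ S.erase r := fun h => hc (mem_of_mem_erase h)
  have hcT : ∀ b ∈ S, ∃ a ∈ (insert c (S.erase r)).erase b, a.1 = c.1 := fun b hb =>
    ⟨c, mem_erase.2 ⟨fun h => hc (h ▸ hb), mem_insert_self c _⟩, rfl⟩
  refine ⟨isDominatingSet_of_erase_subset hS.1 (by omega) (subset_insert c _) (mem_insert_self c _)
    hrc, fun v hvT => ?_⟩
  by_cases hv : v.1 = r.1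
  swap
  · exact exists_defender_of_fst_ne hS hr (subset_insert c _) hrc hcT hvT hv
  have hvc : (lexProd G H).Adj v c := lexProd_adj_of_adj_fst (hv ▸ hrc)
  by_cases hvr : v = r
  · subst hvr
    refine ⟨c, mem_insert_self c _, hvc, ?_⟩
    rw [erase_insert hcS, insert_erase hrS]
    exact hS.1
  have hvS : v ∉ S := fun h => hvT (mem_insert_of_mem (mem_erase.2 ⟨hvr, h⟩))
  obtain ⟨t, ht, hvt, hN⟩ := hS.2 v hvS
  by_cases htr : t = r
  · subst htr
    refine ⟨c, mem_insert_self c _, hvc, ?_⟩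
    rw [erase_insert hcS]
    exact hN
  have hct : c ≠ t := fun h => hc (h ▸ ht)
  refine ⟨t, mem_insert_of_mem (mem_erase.2 ⟨htr, ht⟩), hvt, fun p => ?_⟩
  by_cases hp : p.1 = r.1
  · exact dominates_of_adj_fst (mem_insert_of_mem (mem_erase.2 ⟨hct, mem_insert_self c _⟩))
      (hp ▸ hrc)
  refine (hN p).of_forall_mem_or_mem_copy fun w hw => ?_
  by_cases hwr : w = r
  · subst hwr
    exact Or.inr ⟨Ne.symm hp, v, mem_insert_self v _, hv⟩
  · left
    rw [mem_insert, mem_erase] at hw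
    rw [mem_insert, mem_erase, mem_insert, mem_erase]
    tauto

variable [Fintype α]

def excess (S : Finset (α × β)) : ℕ := ∑ u, (#{p ∈ S | p.1 = u} - 2)

lemma excess_insert_erase_lt {S : Finset (α × β)} {r c : α × β} (hrS : r ∈ S)
    (hr : 2 < #{p ∈ S | p.1 = r.1}) (hrc : r.1 ≠ c.1)
    (hc : c ∈ S ∨ #{p ∈ S | p.1 = c.1} ≤ 1) :
    excess (insert c (S.erase r)) < excess S := by
  have hcopy : ∀ u, {p ∈ insert c (S.erase r) | p.1 = u} =
      if c.1 = u then insert c ({p ∈ S | p.1 = u}.erase r) else {p ∈ S | p.1 = u}.erase r := by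
    intro u
    rw [filter_insert, filter_erase]
  refine sum_lt_sum (fun u _ => ?_) ⟨r.1, mem_univ _, ?_⟩
  · rw [hcopy]
    split_ifs with hu
    · subst hu
      rcases hc with hc | hc
      · have : insert c ({p ∈ S | p.1 = c.1}.erase r) ⊆ {p ∈ S | p.1 = c.1} :=
          insert_subset (mem_filter.2 ⟨hc, rfl⟩) (erase_subset _ _)
        exact Nat.sub_le_sub_right (card_le_card this) 2
      · have := (card_insert_le c ({p ∈ S | p.1 = c.1}.erase r)).trans
          (Nat.succ_le_succ (card_erase_le.trans hc))
        omega
    · exact Nat.sub_le_sub_right card_erase_le 2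
  · have hr' : r ∈ {p ∈ S | p.1 = r.1} := mem_filter.2 ⟨hrS, rfl⟩
    rw [hcopy, if_neg (Ne.symm hrc), card_erase_of_mem hr']
    omega

lemma exists_excess_lt [Nontrivial β] (hG : NoIsolated G) {S : Finset (α × β)}
    (hS : IsSecureDominatingSet (lexProd G H) S) {u : α} (hu : 2 < #{p ∈ S | p.1 = u}) :
    ∃ T, IsSecureDominatingSet (lexProd G H) T ∧ #T ≤ #S ∧ excess T < excess S := by
  obtain ⟨r, hrS, rfl⟩ : ∃ r ∈ S, r.1 = u := by
    obtain ⟨r, hr⟩ := card_pos.1 (by omega : 0 < #{p ∈ S | p.1 = u})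
    exact ⟨r, mem_filter.1 hr⟩
  obtain ⟨x, hx⟩ := hG r.1
  obtain ⟨c, rfl, hT, hc⟩ : ∃ c : α × β, c.1 = x ∧
      IsSecureDominatingSet (lexProd G H) (insert c (S.erase r)) ∧
      (c ∈ S ∨ #{p ∈ S | p.1 = x} ≤ 1) := by
    by_cases hx2 : 1 < #{p ∈ S | p.1 = x}
    · obtain ⟨a, ha, rfl, har⟩ := exists_mem_fst_eq_ne hx2 r
      refine ⟨a, rfl, ?_, Or.inl ha⟩
      rw [insert_eq_of_mem (mem_erase.2 ⟨har, ha⟩)]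
      exact isSecureDominatingSet_erase hS hu hx hx2
    · obtain ⟨y, hy⟩ := exists_mk_notMem_of_card_le_one (not_lt.1 hx2)
      exact ⟨(x, y), rfl, isSecureDominatingSet_insert_erase hS hu hrS hy hx,
        Or.inr (not_lt.1 hx2)⟩
  exact ⟨_, hT, card_insert_erase_le hrS c, excess_insert_erase_lt hrS hu hx.ne hc⟩

lemma exists_isSecureDominatingSet_card_fst_le_two [Nontrivial β] (hG : NoIsolated G)
    {S : Finset (α × β)} (hS : IsSecureDominatingSet (lexProd G H) S) :
    ∃ T, IsSecureDominatingSet (lexProd G H) T ∧ #T ≤ #S ∧ ∀ u, #{p ∈ T | p.1 = u} ≤ 2 := by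
  induction hn : excess S using Nat.strong_induction_on generalizing S with
  | _ n ih =>
    by_cases h : ∀ u, #{p ∈ S | p.1 = u} ≤ 2
    · exact ⟨S, hS, le_rfl, h⟩
    push Not at h
    obtain ⟨u, hu⟩ := h
    obtain ⟨T, hT, hTS, hlt⟩ := exists_excess_lt hG hS hu
    obtain ⟨T', hT', hT'T, hT'2⟩ := ih _ (hn ▸ hlt) hT rfl
    exact ⟨T', hT', hT'T.trans hTS, hT'2⟩

end LexProd

end SecureW

open SecureW in
theorem stmt_0 {α β : Type*} [Fintype α] [Fintype β]
    (G : SimpleGraph α) (H : SimpleGraph β)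
    (hG : NoIsolated G) (hH : Nontrivial β) :
    ∃ f : α × β → ℕ, IsSecureWDom (lexProd G H) [1, 0] f ∧
      weight f = secWDomNum (lexProd G H) [1, 0] ∧
      ∀ u : α, (∑ y : β, f (u, y)) ≤ 2 := by
  classical
  obtain ⟨S, hS, hSmin⟩ := exists_isSecureDominatingSet_card_eq_secWDomNum (lexProd G H)
  obtain ⟨T, hT, hTS, hT2⟩ := exists_isSecureDominatingSet_card_fst_le_two hG hS
  refine ⟨indicatorOne T, (isSecureWDom_indicatorOne_iff _ T).2 hT, ?_, fun u => ?_⟩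
  · rw [weight_indicatorOne]
    exact le_antisymm (hSmin ▸ hTS) (secWDomNum_le_card _ hT)
  · rw [sum_indicatorOne_mk]
    exact hT2 u
end

section
/- If G is a graph with no isolated vertex and H is a nontrivial graph with γ^s_{(1,0)}(H)≥3 and γ(H)=1, then γ^s_{(1,0)}(G∘H) = γ_{(2,1,1)}(G). -/
section Aux

open Finset SecureW

lemma sum_pos_elim {ι : Type*} {s : Finset ι} {f : ι → ℕ} (h : 1 ≤ ∑ i ∈ s, f i) :
    ∃ i ∈ s, 1 ≤ f i := by
  by_contra hc
  push_neg at hc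
  have h0 : ∑ i ∈ s, f i = 0 := Finset.sum_eq_zero (fun i hi => by have := hc i hi; omega)
  omega

lemma sum_two_elim {ι : Type*} [DecidableEq ι] {s : Finset ι} {f : ι → ℕ}
    (h : 2 ≤ ∑ i ∈ s, f i) :
    (∃ i ∈ s, 2 ≤ f i) ∨ ∃ i ∈ s, ∃ j ∈ s, i ≠ j ∧ 1 ≤ f i ∧ 1 ≤ f j := by
  obtain ⟨i, hi, hfi⟩ := sum_pos_elim (le_trans one_le_two h)
  by_cases h2 : 2 ≤ f i
  · exact Or.inl ⟨i, hi, h2⟩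
  · have he := Finset.add_sum_erase s f hi
    have hsum : 1 ≤ ∑ j ∈ s.erase i, f j := by omega
    obtain ⟨j, hj, hfj⟩ := sum_pos_elim hsum
    exact Or.inr ⟨j, Finset.mem_of_mem_erase hj, i, hi, Finset.ne_of_mem_erase hj, hfj, hfi⟩

variable {V : Type*} [Fintype V] {G : SimpleGraph V} {f : V → ℕ}

lemma nbrSum_ge {v u : V} (h : G.Adj v u) : f u ≤ nbrSum G f v := by
  classical
  unfold nbrSum
  exact Finset.single_le_sum (fun i _ => Nat.zero_le _)
    (by simp only [Finset.mem_filter, Finset.mem_univ, true_and]; exact h)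

lemma nbrSum_elim {v : V} (h : 1 ≤ nbrSum G f v) : ∃ u, G.Adj v u ∧ 1 ≤ f u := by
  unfold nbrSum at h
  obtain ⟨u, hu, hfu⟩ := sum_pos_elim h
  simp only [Finset.mem_filter, Finset.mem_univ, true_and] at hu
  exact ⟨u, hu, hfu⟩

lemma nbrSum_two_elim {v : V} (h : 2 ≤ nbrSum G f v) :
    (∃ u, G.Adj v u ∧ 2 ≤ f u) ∨
      ∃ u₁ u₂, G.Adj v u₁ ∧ G.Adj v u₂ ∧ u₁ ≠ u₂ ∧ 1 ≤ f u₁ ∧ 1 ≤ f u₂ := by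
  classical
  unfold nbrSum at h
  rcases sum_two_elim h with ⟨i, hi, h2⟩ | ⟨i, hi, j, hj, hij, h1i, h1j⟩
  · simp only [Finset.mem_filter, Finset.mem_univ, true_and] at hi
    exact Or.inl ⟨i, hi, h2⟩
  · simp only [Finset.mem_filter, Finset.mem_univ, true_and] at hi hj
    exact Or.inr ⟨i, j, hi, hj, hij, h1i, h1j⟩

lemma nbrSum_ge_two {v u₁ u₂ : V} (h₁ : G.Adj v u₁) (h₂ : G.Adj v u₂) (hne : u₁ ≠ u₂)
    (p₁ : 1 ≤ f u₁) (p₂ : 1 ≤ f u₂) : 2 ≤ nbrSum G f v := by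
  classical
  unfold nbrSum
  calc 2 ≤ ∑ i ∈ ({u₁, u₂} : Finset V), f i := by rw [Finset.sum_pair hne]; omega
  _ ≤ _ := Finset.sum_le_sum_of_subset (by
      intro x hx
      simp only [Finset.mem_insert, Finset.mem_singleton] at hx
      rcases hx with rfl | rfl <;>
        simp only [Finset.mem_filter, Finset.mem_univ, true_and] <;> assumption)

lemma isWDom10_iff :
    IsWDom G [1, 0] f ↔ (∀ v, f v ≤ 1) ∧ (∀ v, f v = 0 → ∃ u, G.Adj v u ∧ 1 ≤ f u) := by
  constructor
  · rintro ⟨h1, h2⟩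
    refine ⟨fun v => by have := h1 v; simp at this; omega, fun v hv => ?_⟩
    have := h2 v
    rw [hv] at this
    simp only [List.getD] at this
    exact nbrSum_elim (by simpa using this)
  · rintro ⟨h1, h2⟩
    refine ⟨fun v => by have := h1 v; simp; omega, fun v => ?_⟩
    rcases Nat.eq_zero_or_pos (f v) with hv | hv
    · rw [hv]
      obtain ⟨u, hu, hfu⟩ := h2 v hv
      simpa using le_trans hfu (nbrSum_ge hu)
    · have : f v = 1 := by have := h1 v; omega
      rw [this]
      simp

lemma isWDom211_iff {g : V → ℕ} :
    IsWDom G [2, 1, 1] g ↔ (∀ v, g v ≤ 2) ∧ (∀ v, 1 ≤ nbrSum G g v) ∧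
      (∀ v, g v = 0 → 2 ≤ nbrSum G g v) := by
  constructor
  · rintro ⟨h1, h2⟩
    have hle : ∀ v, g v ≤ 2 := fun v => by have := h1 v; simp at this; omega
    refine ⟨hle, fun v => ?_, fun v hv => ?_⟩
    · have := h2 v
      have h3 := hle v
      interval_cases hgv : g v <;> simp_all
      omega
    · have := h2 v
      rw [hv] at this
      simpa using this
  · rintro ⟨h1, h2, h3⟩
    refine ⟨fun v => by have := h1 v; simp; omega, fun v => ?_⟩
    have hle := h1 v
    interval_cases hgv : g v <;> simp_all

lemma move_le_one {W : Type*} {inst : DecidableEq W} {f : W → ℕ} (hf : ∀ x, f x ≤ 1)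
    (u v : W) : ∀ x, @move W inst f u v x ≤ 1 := by
  intro x
  unfold move
  split_ifs with h1 h2
  · omega
  · have := hf u; omega
  · exact hf x

lemma move_eq_of_ne {W : Type*} {inst : DecidableEq W} {f : W → ℕ} {u v x : W}
    (hxv : x ≠ v) (hxu : x ≠ u) : @move W inst f u v x = f x := by
  unfold move
  rw [if_neg hxv, if_neg hxu]

lemma move_self {W : Type*} {inst : DecidableEq W} (f : W → ℕ) (u v : W) :
    @move W inst f u v v = 1 := if_pos rfl

lemma move_src {W : Type*} {inst : DecidableEq W} (f : W → ℕ) {u v : W} (h : u ≠ v) :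
    @move W inst f u v u = f u - 1 := by
  unfold move
  rw [if_neg h, if_pos rfl]

end Aux
section DirLe

open Finset SecureW

lemma pne {α β : Type*} {x y : α} {c d : β} (h : x ≠ y) : (x, c) ≠ (y, d) :=
  fun hh => h (congrArg Prod.fst hh)

lemma pne2 {α β : Type*} {x : α} {c d : β} (h : c ≠ d) : (x, c) ≠ (x, d) :=
  fun hh => h (congrArg Prod.snd hh)

lemma lexAdj_inr {α β : Type*} (G : SimpleGraph α) (H : SimpleGraph β) {a : α} {b d : β}
    (h : H.Adj b d) : (lexProd G H).Adj (a, b) (a, d) :=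
  show G.Adj a a ∨ (a = a ∧ H.Adj b d) from Or.inr ⟨rfl, h⟩

lemma dir_le {α β : Type*} [Fintype α] [Fintype β]
    (G : SimpleGraph α) (H : SimpleGraph β)
    (hG : NoIsolated G) {b₀ b₁ : β} (hbne : b₁ ≠ b₀) (hb₀ : ∀ d, d ≠ b₀ → H.Adj d b₀) :
    secWDomNum (lexProd G H) [1, 0] ≤ wDomNum G [2, 1, 1] := by
  classical
  have hconst : IsWDom G [2,1,1] (fun _ => 1) := by
    rw [isWDom211_iff]
    exact ⟨fun v => by omega, fun v => by
        obtain ⟨u, hu⟩ := hG v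
        exact le_trans (le_refl 1) (nbrSum_ge (f := fun _ => 1) hu),
      fun v h => by omega⟩
  have hmem : ∃ g, IsWDom G [2,1,1] g ∧ weight g = wDomNum G [2,1,1] :=
    Nat.sInf_mem (⟨weight (fun _ : α => 1), fun _ => 1, hconst, rfl⟩ :
      Set.Nonempty {k | ∃ f, IsWDom G [2,1,1] f ∧ weight f = k})
  obtain ⟨g, hg, hgw⟩ := hmem
  rw [isWDom211_iff] at hg
  obtain ⟨hg2, hg1, hg0⟩ := hg
  have hnb : ∀ a, ∃ a', G.Adj a a' ∧ 1 ≤ g a' := fun a => nbrSum_elim (hg1 a)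
  set F : α × β → ℕ := fun p =>
    (if p.2 = b₀ ∧ 1 ≤ g p.1 then 1 else 0) + (if p.2 = b₁ ∧ g p.1 = 2 then 1 else 0) with hFdef
  have hF1 : ∀ p, F p ≤ 1 := by
    intro p
    simp only [hFdef]
    split_ifs with h h'
    · exact absurd (h'.1.symm.trans h.1) hbne
    all_goals omega
  have hFb₀ : ∀ a, 1 ≤ g a → F (a, b₀) = 1 := by
    intro a ha
    rw [hFdef]
    show (if b₀ = b₀ ∧ 1 ≤ g a then 1 else 0) + (if b₀ = b₁ ∧ g a = 2 then 1 else 0) = 1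
    rw [if_pos ⟨rfl, ha⟩, if_neg (fun h : b₀ = b₁ ∧ g a = 2 => hbne h.1.symm)]
  have hFb₁ : ∀ a, g a = 2 → F (a, b₁) = 1 := by
    intro a ha
    rw [hFdef]
    show (if b₁ = b₀ ∧ 1 ≤ g a then 1 else 0) + (if b₁ = b₁ ∧ g a = 2 then 1 else 0) = 1
    rw [if_neg (fun h : b₁ = b₀ ∧ 1 ≤ g a => hbne h.1), if_pos ⟨rfl, ha⟩]
  have hwF : weight F = weight g := by
    unfold weight
    rw [Fintype.sum_prod_type]
    apply Finset.sum_congr rfl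
    intro a _
    simp only [hFdef]
    rw [Finset.sum_add_distrib]
    simp only [ite_and]
    rw [Finset.sum_ite_eq' Finset.univ b₀ (fun _ => if 1 ≤ g a then 1 else 0),
      Finset.sum_ite_eq' Finset.univ b₁ (fun _ => if g a = 2 then 1 else 0)]
    have := hg2 a
    simp only [Finset.mem_univ, if_pos]
    split_ifs <;> omega
  have hsec : IsSecureWDom (lexProd G H) [1,0] F := by
    constructor
    · rw [isWDom10_iff]
      refine ⟨hF1, ?_⟩
      rintro ⟨a, b⟩ hab
      obtain ⟨a', ha', hga'⟩ := hnb a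
      exact ⟨(a', b₀), Or.inl ha', by rw [hFb₀ a' hga']⟩
    · rintro ⟨a, b⟩ hab
      by_cases hga : 1 ≤ g a
      · -- g a ≥ 1 : defend with (a, b₀)
        have hb : b ≠ b₀ := by
          intro hd; subst hd; rw [hFb₀ a hga] at hab; omega
        refine ⟨(a, b₀), lexAdj_inr G H (hb₀ b hb), by rw [hFb₀ a hga]; omega, ?_⟩
        rw [isWDom10_iff]
        refine ⟨move_le_one hF1 _ _, ?_⟩
        rintro ⟨c, d⟩ hcd
        obtain ⟨a', ha', hga'⟩ := hnb c
        by_cases haa : a' = a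
        · subst haa
          exact ⟨(a', b), Or.inl ha', by rw [move_self]⟩
        · exact ⟨(a', b₀), Or.inl ha',
            by rw [move_eq_of_ne (pne haa) (pne haa), hFb₀ a' hga']⟩
      · have hga0 : g a = 0 := by omega
        by_cases hI : ∃ a', G.Adj a a' ∧ 2 ≤ g a'
        · -- Case I : a neighbour of weight two
          obtain ⟨a', ha', hga'2⟩ := hI
          have hg2' : g a' = 2 := le_antisymm (hg2 a') hga'2
          have hana : a' ≠ a := fun h => by rw [h, hga0] at hg2'; omega
          refine ⟨(a', b₀), Or.inl ha', by rw [hFb₀ a' (by omega)]; omega, ?_⟩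
          rw [isWDom10_iff]
          refine ⟨move_le_one hF1 _ _, ?_⟩
          rintro ⟨c, d⟩ hcd
          by_cases hc1 : c = a
          · subst hc1
            exact ⟨(a', b₁), Or.inl ha',
              by rw [move_eq_of_ne (pne hana) (pne2 hbne), hFb₁ a' hg2']⟩
          by_cases hc2 : c = a'
          · subst hc2
            obtain ⟨a₃, ha₃, hga₃⟩ := hnb c
            have h3a : a₃ ≠ a := fun h => by rw [h, hga0] at hga₃; omega
            have h3a' : a₃ ≠ c := (G.ne_of_adj ha₃).symm
            exact ⟨(a₃, b₀), Or.inl ha₃,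
              by rw [move_eq_of_ne (pne h3a) (pne h3a'), hFb₀ a₃ hga₃]⟩
          by_cases hgc : 1 ≤ g c
          · refine ⟨(c, b₀), lexAdj_inr G H (hb₀ d ?_),
              by rw [move_eq_of_ne (pne hc1) (pne hc2), hFb₀ c hgc]⟩
            intro hd; subst hd
            rw [move_eq_of_ne (pne hc1) (pne hc2), hFb₀ c hgc] at hcd; omega
          · have hgc0 : g c = 0 := by omega
            rcases nbrSum_two_elim (hg0 c hgc0) with ⟨c₂, hc₂, hgc₂⟩ |
                ⟨c₂, c₃, hc₂, hc₃, hcc, hgc₂, hgc₃⟩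
            · by_cases hca : c₂ = a'
              · subst hca
                exact ⟨(c₂, b₁), Or.inl hc₂,
                  by rw [move_eq_of_ne (pne hana) (pne2 hbne), hFb₁ c₂ hg2']⟩
              · have hc2a : c₂ ≠ a := fun h => by rw [h, hga0] at hgc₂; omega
                exact ⟨(c₂, b₀), Or.inl hc₂,
                  by rw [move_eq_of_ne (pne hc2a) (pne hca), hFb₀ c₂ (by omega)]⟩
            · by_cases hca : c₂ = a'
              · have hc3a' : c₃ ≠ a' := fun h => hcc (hca.trans h.symm)
                have hc3a : c₃ ≠ a := fun h => by rw [h, hga0] at hgc₃; omega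
                exact ⟨(c₃, b₀), Or.inl hc₃,
                  by rw [move_eq_of_ne (pne hc3a) (pne hc3a'), hFb₀ c₃ hgc₃]⟩
              · have hc2a : c₂ ≠ a := fun h => by rw [h, hga0] at hgc₂; omega
                exact ⟨(c₂, b₀), Or.inl hc₂,
                  by rw [move_eq_of_ne (pne hc2a) (pne hca), hFb₀ c₂ hgc₂]⟩
        · -- Case II : two neighbours of weight one
          push_neg at hI
          have hno : ∀ x, G.Adj a x → g x ≤ 1 := fun x hx => by have := hI x hx; omega
          rcases nbrSum_two_elim (hg0 a hga0) with ⟨a', ha', hga'2⟩ |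
              ⟨a', a₂, ha', ha₂, hne', hga', hga₂⟩
          · exact absurd hga'2 (by have := hno a' ha'; omega)
          have hana : a' ≠ a := fun h => by rw [h, hga0] at hga'; omega
          have ha2a : a₂ ≠ a := fun h => by rw [h, hga0] at hga₂; omega
          refine ⟨(a', b₀), Or.inl ha', by rw [hFb₀ a' hga']; omega, ?_⟩
          rw [isWDom10_iff]
          refine ⟨move_le_one hF1 _ _, ?_⟩
          rintro ⟨c, d⟩ hcd
          by_cases hc1 : c = a
          · subst hc1
            exact ⟨(a₂, b₀), Or.inl ha₂,
              by rw [move_eq_of_ne (pne ha2a) (pne (Ne.symm hne')), hFb₀ a₂ hga₂]⟩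
          by_cases hc2 : c = a'
          · subst hc2
            obtain ⟨a₃, ha₃, hga₃⟩ := hnb c
            have h3a : a₃ ≠ a := fun h => by rw [h, hga0] at hga₃; omega
            have h3a' : a₃ ≠ c := (G.ne_of_adj ha₃).symm
            exact ⟨(a₃, b₀), Or.inl ha₃,
              by rw [move_eq_of_ne (pne h3a) (pne h3a'), hFb₀ a₃ hga₃]⟩
          by_cases hgc : 1 ≤ g c
          · refine ⟨(c, b₀), lexAdj_inr G H (hb₀ d ?_),
              by rw [move_eq_of_ne (pne hc1) (pne hc2), hFb₀ c hgc]⟩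
            intro hd; subst hd
            rw [move_eq_of_ne (pne hc1) (pne hc2), hFb₀ c hgc] at hcd; omega
          · have hgc0 : g c = 0 := by omega
            rcases nbrSum_two_elim (hg0 c hgc0) with ⟨c₂, hc₂, hgc₂⟩ |
                ⟨c₂, c₃, hc₂, hc₃, hcc, hgc₂, hgc₃⟩
            · have hca : c₂ ≠ a' := fun h => by
                rw [h] at hgc₂; have := hno a' ha'; omega
              have hc2a : c₂ ≠ a := fun h => by rw [h, hga0] at hgc₂; omega
              exact ⟨(c₂, b₀), Or.inl hc₂,
                by rw [move_eq_of_ne (pne hc2a) (pne hca), hFb₀ c₂ (by omega)]⟩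
            · by_cases hca : c₂ = a'
              · have hc3a' : c₃ ≠ a' := fun h => hcc (hca.trans h.symm)
                have hc3a : c₃ ≠ a := fun h => by rw [h, hga0] at hgc₃; omega
                exact ⟨(c₃, b₀), Or.inl hc₃,
                  by rw [move_eq_of_ne (pne hc3a) (pne hc3a'), hFb₀ c₃ hgc₃]⟩
              · have hc2a : c₂ ≠ a := fun h => by rw [h, hga0] at hgc₂; omega
                exact ⟨(c₂, b₀), Or.inl hc₂,
                  by rw [move_eq_of_ne (pne hc2a) (pne hca), hFb₀ c₂ hgc₂]⟩
  calc secWDomNum (lexProd G H) [1,0] ≤ weight F := Nat.sInf_le ⟨F, hsec, rfl⟩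
    _ = wDomNum G [2,1,1] := by rw [hwF, hgw]

end DirLe
section DirGe

open Finset SecureW

lemma not_complete {β : Type*} [Fintype β] (H : SimpleGraph β) (hH : Nontrivial β)
    (h1 : 3 ≤ secWDomNum H [1, 0]) : ¬ ∀ x y : β, x ≠ y → H.Adj x y := by
  classical
  intro hc
  obtain ⟨b₀, b₁, hne⟩ := hH
  set fH : β → ℕ := fun x => (if x = b₀ then 1 else 0) + (if x = b₁ then 1 else 0) with hfd
  have hval : ∀ x, fH x ≤ 1 := by
    intro x
    simp only [hfd]
    split_ifs with u1 u2
    · exact absurd (u1.symm.trans u2) hne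
    all_goals omega
  have hfb₀ : fH b₀ = 1 := by
    rw [hfd]
    show (if b₀ = b₀ then 1 else 0) + (if b₀ = b₁ then 1 else 0) = 1
    rw [if_pos rfl, if_neg hne]
  have hfb₁ : fH b₁ = 1 := by
    rw [hfd]
    show (if b₁ = b₀ then 1 else 0) + (if b₁ = b₁ then 1 else 0) = 1
    rw [if_neg (Ne.symm hne), if_pos rfl]
  have hsec : IsSecureWDom H [1, 0] fH := by
    constructor
    · rw [isWDom10_iff]
      refine ⟨hval, fun v hv => ?_⟩
      have hvb₀ : v ≠ b₀ := fun h => by rw [h, hfb₀] at hv; omega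
      exact ⟨b₀, hc v b₀ hvb₀, by rw [hfb₀]⟩
    · intro v hv
      have hvb₀ : v ≠ b₀ := fun h => by rw [h, hfb₀] at hv; omega
      have hvb₁ : v ≠ b₁ := fun h => by rw [h, hfb₁] at hv; omega
      refine ⟨b₀, hc v b₀ hvb₀, by rw [hfb₀]; omega, ?_⟩
      rw [isWDom10_iff]
      refine ⟨move_le_one hval _ _, fun x hx => ?_⟩
      have hxb₁ : x ≠ b₁ := by
        intro h; subst h
        rw [move_eq_of_ne (Ne.symm hvb₁) (fun hh => hne hh.symm), hfb₁] at hx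
        omega
      exact ⟨b₁, hc x b₁ hxb₁,
        by rw [move_eq_of_ne (Ne.symm hvb₁) (fun hh => hne hh.symm), hfb₁]⟩
  have hw2 : weight fH ≤ 2 := by
    unfold weight
    rw [hfd]
    rw [Finset.sum_add_distrib]
    rw [Finset.sum_ite_eq' Finset.univ b₀ (fun _ => 1),
      Finset.sum_ite_eq' Finset.univ b₁ (fun _ => 1)]
    simp
  have hle : secWDomNum H [1, 0] ≤ weight fH := Nat.sInf_le ⟨fH, hsec, rfl⟩
  omega

lemma dir_ge {α β : Type*} [Fintype α] [Fintype β]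
    (G : SimpleGraph α) (H : SimpleGraph β)
    (hG : NoIsolated G) (hH : Nontrivial β)
    (h1 : 3 ≤ secWDomNum H [1, 0]) :
    wDomNum G [2, 1, 1] ≤ secWDomNum (lexProd G H) [1, 0] := by
  classical
  have hcomp := not_complete H hH h1
  have hconst : IsSecureWDom (lexProd G H) [1, 0] (fun _ => 1) :=
    ⟨isWDom10_iff.mpr ⟨fun v => le_rfl, fun v hv => absurd hv one_ne_zero⟩,
      fun v hv => absurd hv one_ne_zero⟩
  have hmem : ∃ f, IsSecureWDom (lexProd G H) [1, 0] f ∧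
      weight f = secWDomNum (lexProd G H) [1, 0] :=
    Nat.sInf_mem (⟨_, fun _ => 1, hconst, rfl⟩ :
      Set.Nonempty {k | ∃ f, IsSecureWDom (lexProd G H) [1, 0] f ∧ weight f = k})
  obtain ⟨f, ⟨hfdom, hfsec⟩, hfw⟩ := hmem
  rw [isWDom10_iff] at hfdom
  obtain ⟨hfle, hfnb⟩ := hfdom
  set s : α → ℕ := fun a => ∑ b, f (a, b) with hsdef
  set t : α → ℕ := fun a => ∑ x ∈ Finset.univ.filter (fun x => G.Adj a x), s x with htdef
  have hs_eq : ∀ a, s a = ∑ b, f (a, b) := fun a => by rw [hsdef]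
  have ht_eq : ∀ a, t a = ∑ x ∈ Finset.univ.filter (fun x => G.Adj a x), s x :=
    fun a => by rw [htdef]
  have hfs : ∀ a b, f (a, b) ≤ s a := by
    intro a b
    rw [hs_eq]
    exact Finset.single_le_sum (f := fun b => f (a, b)) (fun i _ => Nat.zero_le _)
      (Finset.mem_univ b)
  have hst : ∀ a x, G.Adj a x → s x ≤ t a := by
    intro a x h
    rw [ht_eq]
    exact Finset.single_le_sum (fun i _ => Nat.zero_le _)
      (by simp only [Finset.mem_filter, Finset.mem_univ, true_and]; exact h)
  have hszero : ∀ a, s a = 0 → ∀ b, f (a, b) = 0 := fun a ha b => by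
    have := hfs a b; omega
  have htzero : ∀ a, t a = 0 → ∀ x (b : β), G.Adj a x → f (x, b) = 0 := by
    intro a ha x b h
    have h1 := hst a x h
    have h2 := hfs x b
    omega
  -- Fact B : an isolated-weight copy carries a secure dominating function of H
  have factB : ∀ a, 1 ≤ s a → t a = 0 → 3 ≤ s a := by
    intro a hsa hta
    have hsecH : IsSecureWDom H [1, 0] (fun b => f (a, b)) := by
      constructor
      · rw [isWDom10_iff]
        refine ⟨fun b => hfle (a, b), fun b hb => ?_⟩
        obtain ⟨y, hy, hy1⟩ := hfnb (a, b) hb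
        rcases hy with hadj | ⟨heq, hadjH⟩
        · exfalso
          have h0 := htzero a hta y.1 y.2 hadj
          rw [Prod.mk.eta] at h0
          omega
        · refine ⟨y.2, hadjH, ?_⟩
          have heq2 : a = y.1 := heq
          show 1 ≤ f (a, y.2)
          rw [heq2, Prod.mk.eta]
          exact hy1
      · intro b hb
        obtain ⟨u, hadj, hpos, hmv⟩ := hfsec (a, b) hb
        have hG' : ¬ G.Adj a u.1 := fun hadj' => by
          have h0 := htzero a hta u.1 u.2 hadj'
          rw [Prod.mk.eta] at h0
          omega
        obtain ⟨heq, hadjH⟩ : ((a, b) : α × β).1 = u.1 ∧ H.Adj b u.2 := by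
          rcases hadj with hadj | h
          · exact absurd hadj hG'
          · exact h
        have heq2 : a = u.1 := heq
        refine ⟨u.2, hadjH, by show 0 < f (a, u.2); rw [heq2, Prod.mk.eta]; exact hpos, ?_⟩
        have hmeq : ∀ d, move (fun b => f (a, b)) u.2 b d =
            @move (α × β) (fun p q => Classical.propDecidable (p = q)) f u (a, b) (a, d) := by
          intro d
          unfold move
          by_cases h1 : d = b
          · subst h1
            rw [if_pos rfl, if_pos rfl]
          · rw [if_neg h1, if_neg (fun hh : ((a, d) : α × β) = (a, b) =>
              h1 (congrArg Prod.snd hh))]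
            by_cases h2 : d = u.2
            · rw [if_pos h2, if_pos (show ((a, d) : α × β) = u by rw [h2, heq2])]
              show f (a, u.2) - 1 = f u - 1
              rw [heq2]
            · rw [if_neg h2, if_neg (fun hh : ((a, d) : α × β) = u => h2 (by rw [← hh]))]
        rw [isWDom10_iff]
        constructor
        · intro d
          rw [hmeq d]
          exact move_le_one hfle u (a, b) (a, d)
        · intro d hd
          rw [hmeq d] at hd
          obtain ⟨y, hy, hy1⟩ := (isWDom10_iff.mp hmv).2 (a, d) hd
          by_cases hyv : y = (a, b)
          · subst hyv
            rcases hy with hadj' | ⟨_, hadjH'⟩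
            · exact absurd hadj' (G.irrefl)
            · exact ⟨b, hadjH', by rw [hmeq b, move_self]⟩
          · by_cases hyu : y = u
            · exfalso
              subst hyu
              have huv : y ≠ (a, b) := hyv
              rw [move_src f huv] at hy1
              have := hfle y
              omega
            · rw [move_eq_of_ne hyv hyu] at hy1
              rcases hy with hadj' | ⟨heq', hadjH'⟩
              · exfalso
                have h0 := htzero a hta y.1 y.2 hadj'
                rw [Prod.mk.eta] at h0
                omega
              · refine ⟨y.2, hadjH', ?_⟩
                have heq3 : a = y.1 := heq'
                rw [hmeq y.2]
                have hay : ((a, y.2) : α × β) = y := by rw [heq3]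
                rw [hay, move_eq_of_ne hyv hyu]
                exact hy1
    have hle : secWDomNum H [1, 0] ≤ weight (fun b => f (a, b)) :=
      Nat.sInf_le ⟨_, hsecH, rfl⟩
    have hwa : weight (fun b => f (a, b)) = s a := by rw [hs_eq]; rfl
    omega
  -- Fact A : a zero copy sees total weight at least two
  have factA : ∀ a, s a = 0 → 2 ≤ t a := by
    intro a hsa
    by_contra hlt
    push_neg at hlt
    apply hcomp
    intro x y hxy
    obtain ⟨u, hadj, hupos, hmv⟩ := hfsec (a, y) (hszero a hsa y)
    have hu1 : G.Adj a u.1 := by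
      rcases hadj with h | ⟨heq, _⟩
      · exact h
      · exfalso
        have heq2 : a = u.1 := heq
        have h0 := hszero a hsa u.2
        rw [heq2, Prod.mk.eta] at h0
        omega
    have htprod : t a = ∑ x ∈ (Finset.univ.filter (fun c => G.Adj a c)) ×ˢ
        (Finset.univ : Finset β), f x := by
      rw [ht_eq, hsdef]
      exact (Finset.sum_product _ _ _).symm
    have humem : u ∈ (Finset.univ.filter (fun c => G.Adj a c)) ×ˢ
        (Finset.univ : Finset β) := by
      rw [Finset.mem_product]
      exact ⟨by simp only [Finset.mem_filter, Finset.mem_univ, true_and]; exact hu1,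
        Finset.mem_univ _⟩
    have hother : ∀ z ∈ ((Finset.univ.filter (fun c => G.Adj a c)) ×ˢ
        (Finset.univ : Finset β)).erase u, f z = 0 := by
      intro z hz
      have hsub := Finset.single_le_sum (f := f) (fun i _ => Nat.zero_le _) hz
      have herase := Finset.add_sum_erase _ f humem
      rw [← htprod] at herase
      omega
    have hxv : ((a, x) : α × β) ≠ (a, y) := pne2 hxy
    have hxu : ((a, x) : α × β) ≠ u := fun hh => G.irrefl (by rw [← hh] at hu1; exact hu1)
    have hmx : @move (α × β) (fun p q => Classical.propDecidable (p = q)) f u (a, y) (a, x)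
        = 0 := by
      rw [move_eq_of_ne hxv hxu]
      exact hszero a hsa x
    obtain ⟨w, hw, hw1⟩ := (isWDom10_iff.mp hmv).2 (a, x) hmx
    by_cases hwv : w = (a, y)
    · subst hwv
      rcases hw with h | ⟨_, h⟩
      · exact absurd h G.irrefl
      · exact h
    · exfalso
      by_cases hwu : w = u
      · subst hwu
        have huv : w ≠ (a, y) := hwv
        rw [move_src f huv] at hw1
        have := hfle w
        omega
      · rw [move_eq_of_ne hwv hwu] at hw1
        rcases hw with h | ⟨heq, _⟩
        · have hwmem : w ∈ ((Finset.univ.filter (fun c => G.Adj a c)) ×ˢ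
              (Finset.univ : Finset β)).erase u := by
            rw [Finset.mem_erase, Finset.mem_product]
            exact ⟨hwu, by simp only [Finset.mem_filter, Finset.mem_univ, true_and]; exact h,
              Finset.mem_univ _⟩
          have := hother w hwmem
          omega
        · have heq2 : a = w.1 := heq
          have h0 := hszero a hsa w.2
          rw [heq2, Prod.mk.eta] at h0
          omega
  -- Construction of the (2,1,1)-dominating function on G
  choose c hc using hG
  set Sp : Finset α := Finset.univ.filter (fun a => 1 ≤ s a ∧ t a = 0) with hSp
  set Ch : Finset α := Sp.image c with hCh
  set g : α → ℕ := fun a => if a ∈ Sp then 2 else if a ∈ Ch then 1 else min 2 (s a) with hgdef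
  have hSpmem : ∀ a, a ∈ Sp ↔ (1 ≤ s a ∧ t a = 0) := fun a => by
    rw [hSp]; simp only [Finset.mem_filter, Finset.mem_univ, true_and]
  have hChs : ∀ a ∈ Ch, s a = 0 := by
    intro a ha
    rw [hCh, Finset.mem_image] at ha
    obtain ⟨a', ha', rfl⟩ := ha
    rw [hSpmem] at ha'
    have := hst a' (c a') (hc a')
    omega
  have hSpCh : ∀ a ∈ Sp, a ∉ Ch := fun a ha hcha => by
    rw [hSpmem] at ha
    have := hChs a hcha
    omega
  have hgSp : ∀ a ∈ Sp, g a = 2 := fun a ha => by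
    simp only [hgdef]; rw [if_pos ha]
  have hgCh : ∀ a ∈ Ch, a ∉ Sp → g a = 1 := fun a ha hns => by
    simp only [hgdef]; rw [if_neg hns, if_pos ha]
  have hgelse : ∀ a, a ∉ Sp → a ∉ Ch → g a = min 2 (s a) := fun a h1 h2 => by
    simp only [hgdef]; rw [if_neg h1, if_neg h2]
  have hL1 : ∀ x, 1 ≤ s x → 1 ≤ g x := by
    intro x hx
    by_cases h1 : x ∈ Sp
    · rw [hgSp x h1]; omega
    by_cases h2 : x ∈ Ch
    · rw [hgCh x h2 h1]
    · rw [hgelse x h1 h2]; omega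
  have hL2 : ∀ x, 2 ≤ s x → 2 ≤ g x := by
    intro x hx
    by_cases h1 : x ∈ Sp
    · rw [hgSp x h1]
    by_cases h2 : x ∈ Ch
    · have := hChs x h2; omega
    · rw [hgelse x h1 h2]; omega
  have hL3 : ∀ x, g x ≤ 2 := by
    intro x
    by_cases h1 : x ∈ Sp
    · rw [hgSp x h1]
    by_cases h2 : x ∈ Ch
    · rw [hgCh x h2 h1]; omega
    · rw [hgelse x h1 h2]; omega
  have hgdom : IsWDom G [2, 1, 1] g := by
    rw [isWDom211_iff]
    refine ⟨hL3, ?_, ?_⟩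
    · intro a
      by_cases h1 : a ∈ Sp
      · have hmemCh : c a ∈ Ch := by rw [hCh]; exact Finset.mem_image_of_mem c h1
        have hpos : 1 ≤ g (c a) := by
          by_cases h2 : c a ∈ Sp
          · rw [hgSp _ h2]; omega
          · rw [hgCh _ hmemCh h2]
        exact le_trans hpos (nbrSum_ge (hc a))
      by_cases h2 : a ∈ Ch
      · rw [hCh, Finset.mem_image] at h2
        obtain ⟨a', ha', heq⟩ := h2
        have hadj : G.Adj a a' := by rw [← heq]; exact (hc a').symm
        exact le_trans (by rw [hgSp a' ha'] ; omega) (nbrSum_ge hadj)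
      · have hta : 1 ≤ t a := by
          by_cases hs0 : s a = 0
          · have := factA a hs0; omega
          · by_contra hlt
            push_neg at hlt
            exact h1 ((hSpmem a).mpr ⟨by omega, by omega⟩)
        rw [ht_eq] at hta
        obtain ⟨x, hx, hx1⟩ := sum_pos_elim hta
        simp only [Finset.mem_filter, Finset.mem_univ, true_and] at hx
        exact le_trans (hL1 x hx1) (nbrSum_ge hx)
    · intro a ha0
      have hnSp : a ∉ Sp := fun h => by rw [hgSp a h] at ha0; omega
      have hnCh : a ∉ Ch := fun h => by rw [hgCh a h hnSp] at ha0; omega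
      have hsa : s a = 0 := by rw [hgelse a hnSp hnCh] at ha0; omega
      have hta := factA a hsa
      rw [ht_eq] at hta
      rcases sum_two_elim hta with ⟨x, hx, hx2⟩ | ⟨x, hxm, y, hym, hxy, hx1, hy1⟩
      · simp only [Finset.mem_filter, Finset.mem_univ, true_and] at hx
        exact le_trans (hL2 x hx2) (nbrSum_ge hx)
      · simp only [Finset.mem_filter, Finset.mem_univ, true_and] at hxm hym
        exact nbrSum_ge_two hxm hym hxy (hL1 x hx1) (hL1 y hy1)
  have hweight : weight g ≤ weight f := by
    have hwf : weight f = ∑ a, s a := by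
      unfold weight
      rw [Fintype.sum_prod_type, hsdef]
    have hdisj : Disjoint Sp Ch := by
      rw [Finset.disjoint_left]
      exact fun {a} ha hcha => hSpCh a ha hcha
    have hsub : Sp ∪ Ch ⊆ Finset.univ := Finset.subset_univ _
    have hsplitg := Finset.sum_sdiff (f := g) hsub
    have hsplits := Finset.sum_sdiff (f := s) hsub
    have hgU : ∑ a ∈ Sp ∪ Ch, g a = (∑ a ∈ Sp, g a) + ∑ a ∈ Ch, g a :=
      Finset.sum_union hdisj
    have hsUeq : ∑ a ∈ Sp ∪ Ch, s a = (∑ a ∈ Sp, s a) + ∑ a ∈ Ch, s a :=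
      Finset.sum_union hdisj
    have hgSp' : ∑ a ∈ Sp, g a = 2 * Sp.card := by
      rw [Finset.sum_congr rfl (fun a ha => hgSp a ha), Finset.sum_const, smul_eq_mul, mul_comm]
    have hgCh' : ∑ a ∈ Ch, g a = Ch.card := by
      rw [Finset.sum_congr rfl (fun a ha => hgCh a ha (fun hs => hSpCh a hs ha)),
        Finset.sum_const, smul_eq_mul, mul_one]
    have hcard : Ch.card ≤ Sp.card := by rw [hCh]; exact Finset.card_image_le
    have hrest : ∑ a ∈ Finset.univ \ (Sp ∪ Ch), g a ≤ ∑ a ∈ Finset.univ \ (Sp ∪ Ch), s a := by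
      apply Finset.sum_le_sum
      intro a ha
      rw [Finset.mem_sdiff, Finset.mem_union] at ha
      push_neg at ha
      rw [hgelse a ha.2.1 ha.2.2]
      omega
    have hsSp : 3 * Sp.card ≤ ∑ a ∈ Sp, s a := by
      calc 3 * Sp.card = ∑ _a ∈ Sp, 3 := by rw [Finset.sum_const, smul_eq_mul, mul_comm]
        _ ≤ _ := Finset.sum_le_sum (fun a ha => by
            rw [hSpmem] at ha
            exact factB a ha.1 ha.2)
    show (∑ v, g v) ≤ weight f
    rw [hwf]
    omega
  calc wDomNum G [2, 1, 1] ≤ weight g := Nat.sInf_le ⟨g, hgdom, rfl⟩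
    _ ≤ weight f := hweight
    _ = secWDomNum (lexProd G H) [1, 0] := hfw

end DirGe
open SecureW in
theorem stmt_3 {α β : Type*} [Fintype α] [Fintype β]
    (G : SimpleGraph α) (H : SimpleGraph β)
    (hG : NoIsolated G) (hH : Nontrivial β)
    (h1 : 3 ≤ secWDomNum H [1, 0]) (h2 : domNum H = 1) :
    secWDomNum (lexProd G H) [1, 0] = wDomNum G [2, 1, 1] := by
  classical
  have hconstH : IsWDom H [1, 0] (fun _ => 1) :=
    isWDom10_iff.mpr ⟨fun _ => le_rfl, fun v hv => absurd hv one_ne_zero⟩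
  have hmem : ∃ fH, IsWDom H [1, 0] fH ∧ weight fH = domNum H :=
    Nat.sInf_mem (⟨_, fun _ => 1, hconstH, rfl⟩ :
      Set.Nonempty {k | ∃ f, IsWDom H [1, 0] f ∧ weight f = k})
  obtain ⟨fH, hfH, hwH⟩ := hmem
  rw [h2] at hwH
  rw [isWDom10_iff] at hfH
  obtain ⟨hle1, hdom1⟩ := hfH
  have hw1 : ∑ b, fH b = 1 := hwH
  obtain ⟨b₀, _, hb₀1⟩ := sum_pos_elim (le_of_eq hw1.symm)
  have hrest : ∀ b, b ≠ b₀ → fH b = 0 := by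
    intro b hbne
    have he := Finset.add_sum_erase Finset.univ fH (Finset.mem_univ b₀)
    have hb : fH b ≤ ∑ x ∈ Finset.univ.erase b₀, fH x :=
      Finset.single_le_sum (fun i _ => Nat.zero_le _)
        (Finset.mem_erase.mpr ⟨hbne, Finset.mem_univ b⟩)
    omega
  have huniv : ∀ d, d ≠ b₀ → H.Adj d b₀ := by
    intro d hd
    obtain ⟨u, hu, hu1⟩ := hdom1 d (hrest d hd)
    have heq : u = b₀ := by
      by_contra hne
      rw [hrest u hne] at hu1
      omega
    rwa [heq] at hu
  obtain ⟨b₁, hb₁⟩ := exists_ne b₀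
  exact le_antisymm (dir_le G H hG hb₁ huniv) (dir_ge G H hG hH h1)
end

section
/- If G is a graph with no isolated vertex and H is a nontrivial graph with γ^s_{(1,0)}(H)=γ(H)=3, then γ_{(2,2,1)}(G) ≤ γ^s_{(1,0)}(G∘H) ≤ γ_{(2,2,2)}(G). -/
namespace SecureW
open Finset
open scoped Classical

variable {α β : Type*} [Fintype α] [Fintype β]

lemma sum_eq_one' {s : Finset α} {f : α → ℕ} (h : ∑ x ∈ s, f x = 1) :
    ∃ a ∈ s, f a = 1 ∧ ∀ b ∈ s, b ≠ a → f b = 0 := by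
  have h0 : ∃ a ∈ s, 0 < f a := by
    by_contra hc
    push_neg at hc
    have : ∑ x ∈ s, f x = 0 := Finset.sum_eq_zero (fun x hx => Nat.le_zero.1 (hc x hx))
    omega
  obtain ⟨a, ha, hpos⟩ := h0
  have hsplit : f a + ∑ x ∈ s.erase a, f x = ∑ x ∈ s, f x := Finset.add_sum_erase s f ha
  have herase : ∑ x ∈ s.erase a, f x = 0 := by omega
  refine ⟨a, ha, by omega, fun b hb hne => ?_⟩
  exact (Finset.sum_eq_zero_iff).1 herase b (Finset.mem_erase.2 ⟨hne, hb⟩)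

lemma nbr_lex (G : SimpleGraph α) (H : SimpleGraph β) (g : α × β → ℕ) (v : α) (b : β) :
    nbrSum (lexProd G H) g (v, b) =
      (∑ u ∈ univ.filter (fun u => G.Adj v u), ∑ c, g (u, c)) +
        nbrSum H (fun c => g (v, c)) b := by
  unfold nbrSum
  rw [Finset.sum_filter, Finset.sum_filter, Finset.sum_filter, Fintype.sum_prod_type]
  have key : ∀ u, (∑ c, if (lexProd G H).Adj (v, b) (u, c) then g (u, c) else 0) =
      (if G.Adj v u then ∑ c, g (u, c) else 0) +
        (if v = u then ∑ c, if H.Adj b c then g (u, c) else 0 else 0) := by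
    intro u
    by_cases h1 : G.Adj v u
    · have hne : v ≠ u := h1.ne
      simp [lexProd, h1, hne]
    · by_cases h2 : v = u
      · subst h2
        simp [lexProd, h1]
      · simp [lexProd, h1, h2]
  rw [Finset.sum_congr rfl (fun u _ => key u), Finset.sum_add_distrib]
  congr 1
  rw [Finset.sum_ite_eq univ v (fun u => ∑ c, if H.Adj b c then g (u, c) else 0)]
  simp

end SecureW

namespace SecureW
open Finset
open scoped Classical
set_option linter.unusedSectionVars false

variable {α β : Type*} [Fintype α] [Fintype β]

lemma getD10_le (k : ℕ) : ([1, 0] : List ℕ).getD k 0 ≤ 1 := by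
  rcases k with _ | _ | k <;> simp [List.getD]

lemma nbrSum_mono (G : SimpleGraph α) {f f' : α → ℕ} (h : ∀ v, f v ≤ f' v) (v : α) :
    nbrSum G f v ≤ nbrSum G f' v := by
  unfold nbrSum
  exact Finset.sum_le_sum (fun u _ => h u)

lemma le_nbrSum (G : SimpleGraph α) (f : α → ℕ) {v u : α} (h : G.Adj v u) :
    f u ≤ nbrSum G f v := by
  unfold nbrSum
  exact Finset.single_le_sum (fun i _ => Nat.zero_le _) (by simp [h])

lemma nbr_zero (G : SimpleGraph α) (H : SimpleGraph β) (g' : α × β → ℕ) (v : α) (x : β)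
    (hext : ∀ u, G.Adj v u → ∀ c, g' (u, c) = 0)
    (hint : ∀ c, H.Adj x c → g' (v, c) = 0) :
    nbrSum (lexProd G H) g' (v, x) = 0 := by
  rw [nbr_lex]
  have hz1 : (∑ u ∈ univ.filter (fun u => G.Adj v u), ∑ c, g' (u, c)) = 0 :=
    Finset.sum_eq_zero (fun u hu => Finset.sum_eq_zero
      (fun c _ => hext u (Finset.mem_filter.1 hu).2 c))
  have hz2 : nbrSum H (fun c => g' (v, c)) x = 0 := by
    unfold nbrSum
    exact Finset.sum_eq_zero (fun c hc => hint c (Finset.mem_filter.1 hc).2)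
  omega

lemma not_two_dom (H : SimpleGraph β) (h2 : domNum H = 3) (a b : β) :
    ∃ c, c ≠ a ∧ c ≠ b ∧ ¬H.Adj a c ∧ ¬H.Adj b c := by
  by_contra hcon
  push_neg at hcon
  set f : β → ℕ := fun c => if c = a ∨ c = b then 1 else 0 with hf
  have hdom : IsWDom H [1, 0] f := by
    constructor
    · intro v; simp only [hf]; split_ifs <;> simp
    · intro v
      by_cases hv : v = a ∨ v = b
      · have : f v = 1 := by simp [hf, hv]
        rw [this]
        exact Nat.zero_le _
      · push_neg at hv
        have hadj : H.Adj a v ∨ H.Adj b v := by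
          by_cases hav : H.Adj a v
          · exact Or.inl hav
          · exact Or.inr (hcon v hv.1 hv.2 hav)
        have hfv : f v = 0 := by simp [hf, hv.1, hv.2]
        rw [hfv]
        have hex : ∃ u, H.Adj v u ∧ f u = 1 := by
          rcases hadj with h | h
          · exact ⟨a, h.symm, by simp [hf]⟩
          · exact ⟨b, h.symm, by simp [hf]⟩
        obtain ⟨u, hu, hfu⟩ := hex
        have := le_nbrSum H f hu
        have hg : ([1, 0] : List ℕ).getD 0 0 = 1 := rfl
        rw [hg]
        omega
  have hwt : weight f ≤ 2 := by
    unfold weight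
    have hle : ∀ v, f v ≤ (if v = a then 1 else 0) + (if v = b then 1 else 0) := by
      intro v; simp only [hf]; split_ifs <;> first | omega | (exfalso; tauto)
    calc ∑ v, f v ≤ ∑ v, ((if v = a then 1 else 0) + (if v = b then 1 else 0)) :=
          Finset.sum_le_sum (fun v _ => hle v)
      _ ≤ 1 + 1 := by
          rw [Finset.sum_add_distrib]
          gcongr <;> simp [Finset.sum_ite_eq']
      _ ≤ 2 := by omega
  have hle3 : domNum H ≤ weight f := Nat.sInf_le ⟨f, hdom, rfl⟩
  omega

end SecureW
namespace SecureW
open Finset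
open scoped Classical
set_option linter.unusedSectionVars false

lemma move_congr {V : Type*} {i1 i2 : DecidableEq V} (f : V → ℕ) (u v : V) :
    @move V i1 f u v = @move V i2 f u v := by
  funext x
  unfold move
  by_cases h1 : x = v
  · simp [h1]
  · by_cases h2 : x = u
    · simp [h1, h2]
    · simp [h1, h2]

end SecureW

namespace SecureW
open Finset
open scoped Classical
set_option linter.unusedSectionVars false
set_option maxHeartbeats 1000000

variable {α β : Type*} [Fintype α] [Fintype β]

lemma ub_aux (G : SimpleGraph α) (H : SimpleGraph β) (hH : Nontrivial β)
    (f : α → ℕ) (hf : IsWDom G [2, 2, 2] f) :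
    ∃ g, IsSecureWDom (lexProd G H) [1, 0] g ∧ weight g = weight f := by
  obtain ⟨b0, b1, hbne⟩ := hH
  set g : α × β → ℕ := fun p =>
    (if p.2 = b0 ∧ 1 ≤ f p.1 then 1 else 0) + (if p.2 = b1 ∧ 2 ≤ f p.1 then 1 else 0) with hg
  have hgle : ∀ p, g p ≤ 1 := by
    intro p
    simp only [hg]
    split_ifs with h1 h2
    · exact absurd (h1.1.symm.trans h2.1) hbne
    · omega
    · omega
    · omega
  -- fiber sums
  have hfib : ∀ v, (∑ c, g (v, c)) = f v := by
    intro v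
    have h3 := hf.1 v
    simp only [hg]
    rw [Finset.sum_add_distrib]
    have e1 : (∑ c, if c = b0 ∧ 1 ≤ f v then 1 else 0) = if 1 ≤ f v then 1 else 0 := by
      simp only [ite_and]
      rw [Finset.sum_ite_eq' univ b0 (fun _ => if 1 ≤ f v then 1 else 0)]
      simp
    have e2 : (∑ c, if c = b1 ∧ 2 ≤ f v then 1 else 0) = if 2 ≤ f v then 1 else 0 := by
      simp only [ite_and]
      rw [Finset.sum_ite_eq' univ b1 (fun _ => if 2 ≤ f v then 1 else 0)]
      simp
    rw [e1, e2]
    simp only [List.length] at h3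
    split_ifs <;> omega
  -- nbrSum in G of f is at least 2 everywhere
  have hf2 : ∀ v, 2 ≤ nbrSum G f v := by
    intro v
    have h3 := hf.1 v
    have := hf.2 v
    simp only [List.length] at h3
    interval_cases hfv : f v <;> simpa using this
  -- key bound
  have hkey : ∀ v b, 2 ≤ nbrSum (lexProd G H) g (v, b) := by
    intro v b
    rw [nbr_lex]
    have : (∑ u ∈ univ.filter (fun u => G.Adj v u), ∑ c, g (u, c)) = nbrSum G f v := by
      unfold nbrSum
      exact Finset.sum_congr rfl (fun u _ => hfib u)
    rw [this]
    have := hf2 v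
    omega
  have hdom : IsWDom (lexProd G H) [1, 0] g := by
    refine ⟨fun p => by have := hgle p; simp only [List.length]; omega, fun p => ?_⟩
    obtain ⟨v, b⟩ := p
    have := hkey v b
    have := getD10_le (g (v, b))
    omega
  refine ⟨g, ⟨hdom, ?_⟩, ?_⟩
  · -- secure
    intro p hp0
    obtain ⟨x, y⟩ := p
    -- find a positive-weight neighbour
    have h2x := hf2 x
    have hex : ∃ u, G.Adj x u ∧ 1 ≤ f u := by
      by_contra hc
      push_neg at hc
      have : nbrSum G f x = 0 := by
        unfold nbrSum
        exact Finset.sum_eq_zero (fun u hu => by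
          have := hc u (Finset.mem_filter.1 hu).2
          omega)
      omega
    obtain ⟨u0, hu0, hfu0⟩ := hex
    set q : α × β := (u0, b0) with hq
    have hgq : g q = 1 := by
      simp [hg, hq, hfu0, hbne]
    have hadj : (lexProd G H).Adj (x, y) q := Or.inl hu0
    refine ⟨q, hadj, by rw [hgq]; omega, ?_⟩
    rw [move_congr (i2 := inferInstance)]
    -- the moved function is still dominating
    set g' : α × β → ℕ := move g q (x, y) with hg'
    have hpt : ∀ s, g s ≤ g' s + (if s = q then 1 else 0) := by
      intro s
      by_cases h1 : s = (x, y)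
      · subst h1
        rw [hp0]
        exact Nat.zero_le _
      · by_cases h2 : s = q
        · subst h2
          simp [hg', move, h1]
          omega
        · simp only [hg', move, if_neg h1, if_neg h2]
          omega
    have hnbr : ∀ r, nbrSum (lexProd G H) g r ≤ nbrSum (lexProd G H) g' r + 1 := by
      intro r
      unfold nbrSum
      calc ∑ s ∈ univ.filter (fun s => (lexProd G H).Adj r s), g s
          ≤ ∑ s ∈ univ.filter (fun s => (lexProd G H).Adj r s),
              (g' s + (if s = q then 1 else 0)) := Finset.sum_le_sum (fun s _ => hpt s)
        _ = (∑ s ∈ univ.filter (fun s => (lexProd G H).Adj r s), g' s) +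
              ∑ s ∈ univ.filter (fun s => (lexProd G H).Adj r s), (if s = q then 1 else 0) := by
            rw [Finset.sum_add_distrib]
        _ ≤ (∑ s ∈ univ.filter (fun s => (lexProd G H).Adj r s), g' s) + 1 := by
            gcongr
            rw [Finset.sum_ite_eq' (univ.filter (fun s => (lexProd G H).Adj r s)) q
              (fun _ => 1)]
            split_ifs <;> omega
    constructor
    · intro r
      have h1 := hgle r
      have h2 := hgle q
      simp only [hg', move, List.length]
      split_ifs <;> omega
    · intro r
      obtain ⟨s, t⟩ := r
      have h1 := hkey s t
      have h2 := hnbr (s, t)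
      have h3 := getD10_le (g' (s, t))
      omega
  · -- weight
    unfold weight
    rw [Fintype.sum_prod_type]
    exact Finset.sum_congr rfl (fun v _ => hfib v)

end SecureW

namespace SecureW
open Finset
open scoped Classical
set_option linter.unusedSectionVars false
set_option maxHeartbeats 1000000

variable {α β : Type*} [Fintype α] [Fintype β]

/-- `v` has a heavy fiber but all its neighbours' fibers are empty. -/
def RichIso (G : SimpleGraph α) (w : α → ℕ) (v : α) : Prop :=
  3 ≤ w v ∧ ∀ u, G.Adj v u → w u = 0

/-- `u` is the chosen neighbour of some rich isolated vertex. -/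
def Bumped (G : SimpleGraph α) (hG : NoIsolated G) (w : α → ℕ) (u : α) : Prop :=
  ∃ x, RichIso G w x ∧ u = (hG x).choose

lemma lb_aux (G : SimpleGraph α) (H : SimpleGraph β) (hG : NoIsolated G) (hH : Nontrivial β)
    (h1 : secWDomNum H [1, 0] = 3) (h2 : domNum H = 3)
    (g : α × β → ℕ) (hg : IsSecureWDom (lexProd G H) [1, 0] g) :
    ∃ f, IsWDom G [2, 2, 1] f ∧ weight f ≤ weight g := by
  have hNE : Nonempty β := hH.to_nonempty
  set w : α → ℕ := fun v => ∑ c, g (v, c) with hw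
  set f0 : α → ℕ := fun v => min 2 (w v) with hf0
  have hgval : ∀ p, g p < 2 := by
    intro p
    have := hg.1.1 p
    simpa using this
  have hdomg : ∀ p, g p = 0 → 1 ≤ nbrSum (lexProd G H) g p := by
    intro p hp
    have h := hg.1.2 p
    rw [hp] at h
    exact h
  have hND := not_two_dom H h2
  have hfib0 : ∀ v, w v = 0 → ∀ c, g (v, c) = 0 := by
    intro v hv c
    exact (Finset.sum_eq_zero_iff).1 hv c (mem_univ c)
  -- Sub-lemma A
  have hA : ∀ v, w v ≤ 1 → 2 ≤ ∑ u ∈ univ.filter (fun u => G.Adj v u), f0 u := by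
    intro v hwv
    by_contra hlt
    push_neg at hlt
    have hwu : ∀ u, G.Adj v u → w u ≤ 1 := by
      intro u hu
      have h : f0 u ≤ ∑ u ∈ univ.filter (fun u => G.Adj v u), f0 u :=
        Finset.single_le_sum (f := f0) (fun i _ => Nat.zero_le _)
          (Finset.mem_filter.2 ⟨mem_univ u, hu⟩)
      have h2 : f0 u = min 2 (w u) := by simp only [hf0]
      omega
    have hEe : (∑ u ∈ univ.filter (fun u => G.Adj v u), w u)
        = ∑ u ∈ univ.filter (fun u => G.Adj v u), f0 u := by
      refine Finset.sum_congr rfl (fun u hu => ?_)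
      have := hwu u (Finset.mem_filter.1 hu).2
      simp only [hf0]
      omega
    have hE : (∑ u ∈ univ.filter (fun u => G.Adj v u), w u) ≤ 1 := by omega
    have hE01 : (∑ u ∈ univ.filter (fun u => G.Adj v u), w u) = 0 ∨
        (∑ u ∈ univ.filter (fun u => G.Adj v u), w u) = 1 := by omega
    rcases hE01 with hE0 | hE1
    · -- no external weight at all
      have hext0 : ∀ u, G.Adj v u → ∀ c, g (u, c) = 0 := by
        intro u hu c
        exact hfib0 u ((Finset.sum_eq_zero_iff).1 hE0 u
          (Finset.mem_filter.2 ⟨mem_univ u, hu⟩)) c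
      have hwv01 : w v = 0 ∨ w v = 1 := by omega
      rcases hwv01 with hv0 | hv1
      · obtain ⟨b⟩ := hNE
        have hz := nbr_zero G H g v b hext0 (fun c _ => hfib0 v hv0 c)
        have := hdomg (v, b) (hfib0 v hv0 b)
        omega
      · obtain ⟨a, -, ha1, hauniq⟩ := sum_eq_one' hv1
        obtain ⟨b, hba, -, hnadj, -⟩ := hND a a
        have hgvb : g (v, b) = 0 := hauniq b (mem_univ b) hba
        have hz := nbr_zero G H g v b hext0 (fun c hc => by
          by_cases hca : c = a
          · exact absurd (hca ▸ hc).symm hnadj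
          · exact hauniq c (mem_univ c) hca)
        have := hdomg (v, b) hgvb
        omega
    · -- exactly one unit of external weight, at (u0, c0)
      obtain ⟨u0, hu0mem, hwu0, huuniq⟩ := sum_eq_one' hE1
      have hu0 : G.Adj v u0 := (Finset.mem_filter.1 hu0mem).2
      obtain ⟨c0, -, hc0, hc0uniq⟩ := sum_eq_one' hwu0
      have hvne : v ≠ u0 := hu0.ne
      have hext1 : ∀ u, G.Adj v u → ∀ c, (u, c) ≠ (u0, c0) → g (u, c) = 0 := by
        intro u hu c hne
        by_cases h : u = u0
        · subst h
          refine hc0uniq c (mem_univ c) (fun hc => hne ?_)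
          rw [hc]
        · exact hfib0 u (huuniq u (Finset.mem_filter.2 ⟨mem_univ u, hu⟩) h) c
      have hwv01 : w v = 0 ∨ w v = 1 := by omega
      rcases hwv01 with hv0 | hv1
      · -- fiber of v empty
        obtain ⟨b⟩ := hNE
        have hgvb : g (v, b) = 0 := hfib0 v hv0 b
        obtain ⟨q, hqadj, hqpos, hqdom⟩ := hg.2 (v, b) hgvb
        obtain ⟨q1, q2⟩ := q
        have hq : (q1, q2) = (u0, c0) := by
          by_contra hqq
          rcases hqadj with h | h
          · exact absurd (hext1 q1 h q2 hqq) (by omega)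
          · have hq1 : v = q1 := h.1
            have : g (q1, q2) = 0 := by
              rw [← hq1]
              exact hfib0 v hv0 q2
            omega
        rw [hq] at hqdom hqpos
        rw [move_congr (i2 := inferInstance)] at hqdom
        set g' : α × β → ℕ := move g (u0, c0) (v, b) with hg'
        obtain ⟨b', hb'b, -, hnadjbb', -⟩ := hND b b
        have hne1 : ((v : α), b') ≠ (v, b) := by simp [hb'b]
        have hne2 : ((v : α), b') ≠ (u0, c0) := by simp [hvne]
        have hval' : g' (v, b') = 0 := by
          rw [hg']
          unfold move
          rw [if_neg hne1, if_neg hne2]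
          exact hfib0 v hv0 b'
        have hx := hqdom.2 (v, b')
        rw [hval'] at hx
        have hx' : 1 ≤ nbrSum (lexProd G H) g' (v, b') := hx
        have hz := nbr_zero G H g' v b'
          (by
            intro u hu c
            rw [hg']
            unfold move
            have hnea : ((u : α), c) ≠ (v, b) := by
              intro hcon
              exact hu.ne' (congrArg Prod.fst hcon)
            rw [if_neg hnea]
            by_cases hcc : ((u : α), c) = (u0, c0)
            · rw [if_pos hcc]
              omega
            · rw [if_neg hcc]
              exact hext1 u hu c hcc)
          (by
            intro c hc
            rw [hg']
            unfold move
            have hcb : ((v : α), c) ≠ (v, b) := by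
              intro hcon
              have : c = b := congrArg Prod.snd hcon
              subst this
              exact hnadjbb' hc.symm
            have hcc : ((v : α), c) ≠ (u0, c0) := by simp [hvne]
            rw [if_neg hcb, if_neg hcc]
            exact hfib0 v hv0 c)
        omega
      · -- fiber of v has one unit, at (v, a)
        obtain ⟨a, -, ha1, hauniq⟩ := sum_eq_one' hv1
        obtain ⟨b, hba, -, hnadj, -⟩ := hND a a
        have hgvb : g (v, b) = 0 := hauniq b (mem_univ b) hba
        obtain ⟨q, hqadj, hqpos, hqdom⟩ := hg.2 (v, b) hgvb
        obtain ⟨q1, q2⟩ := q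
        have hq : (q1, q2) = (u0, c0) := by
          by_contra hqq
          rcases hqadj with h | h
          · exact absurd (hext1 q1 h q2 hqq) (by omega)
          · have hq1v : q1 = v := h.1.symm
            subst hq1v
            have hq2a : q2 = a := by
              by_contra hq2a
              exact absurd (hauniq q2 (mem_univ q2) hq2a) (by omega)
            subst hq2a
            exact hnadj h.2.symm
        rw [hq] at hqdom hqpos
        rw [move_congr (i2 := inferInstance)] at hqdom
        set g' : α × β → ℕ := move g (u0, c0) (v, b) with hg'
        obtain ⟨b'', hb''a, hb''b, hnadjab'', hnadjbb''⟩ := hND a b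
        have hne1 : ((v : α), b'') ≠ (v, b) := by simp [hb''b]
        have hne2 : ((v : α), b'') ≠ (u0, c0) := by simp [hvne]
        have hval'' : g' (v, b'') = 0 := by
          rw [hg']
          unfold move
          rw [if_neg hne1, if_neg hne2]
          exact hauniq b'' (mem_univ b'') hb''a
        have hx := hqdom.2 (v, b'')
        rw [hval''] at hx
        have hx' : 1 ≤ nbrSum (lexProd G H) g' (v, b'') := hx
        have hz := nbr_zero G H g' v b''
          (by
            intro u hu c
            rw [hg']
            unfold move
            have hnea : ((u : α), c) ≠ (v, b) := by
              intro hcon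
              exact hu.ne' (congrArg Prod.fst hcon)
            rw [if_neg hnea]
            by_cases hcc : ((u : α), c) = (u0, c0)
            · rw [if_pos hcc]
              omega
            · rw [if_neg hcc]
              exact hext1 u hu c hcc)
          (by
            intro c hc
            rw [hg']
            unfold move
            have hcb : ((v : α), c) ≠ (v, b) := by
              intro hcon
              have : c = b := congrArg Prod.snd hcon
              subst this
              exact hnadjbb'' hc.symm
            have hcc : ((v : α), c) ≠ (u0, c0) := by simp [hvne]
            rw [if_neg hcb, if_neg hcc]
            by_cases hca : c = a
            · subst hca
              exact absurd hc.symm hnadjab''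
            · exact hauniq c (mem_univ c) hca)
        omega
  -- Sub-lemma B
  have hB : ∀ v, 2 ≤ w v → (∀ u, G.Adj v u → w u = 0) → 3 ≤ w v := by
    intro v hwv hext
    by_contra h3
    have hwv2 : w v = 2 := by omega
    have hextz : ∀ u, G.Adj v u → ∀ c, g (u, c) = 0 := fun u hu => hfib0 u (hext u hu)
    have hextsum : ∀ (m : α × β → ℕ), (∀ u, G.Adj v u → ∀ c, m (u, c) = 0) →
        (∑ u ∈ univ.filter (fun u => G.Adj v u), ∑ c, m (u, c)) = 0 := by
      intro m hm
      exact Finset.sum_eq_zero (fun u hu => Finset.sum_eq_zero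
        (fun c _ => hm u (Finset.mem_filter.1 hu).2 c))
    have hwdomH : IsWDom H [1, 0] (fun c => g (v, c)) := by
      constructor
      · intro c
        exact hg.1.1 (v, c)
      · intro c
        have hx := hg.1.2 (v, c)
        rw [nbr_lex, hextsum g hextz, zero_add] at hx
        exact hx
    have hsec : IsSecureWDom H [1, 0] (fun c => g (v, c)) := by
      refine ⟨hwdomH, ?_⟩
      intro c hc
      obtain ⟨q, hqadj, hqpos, hqdom⟩ := hg.2 (v, c) hc
      obtain ⟨q1, q2⟩ := q
      have hq1 : q1 = v := by
        rcases hqadj with h | h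
        · exact absurd (hextz q1 h q2) (by omega)
        · exact h.1.symm
      rw [hq1] at hqpos hqdom
      have hadjH : H.Adj c q2 := by
        rcases hqadj with h | h
        · rw [hq1] at h
          exact absurd h (G.irrefl)
        · exact h.2
      refine ⟨q2, hadjH, hqpos, ?_⟩
      rw [move_congr (i2 := inferInstance)]
      rw [move_congr (i2 := inferInstance)] at hqdom
      constructor
      · intro x
        have hv1 := hgval (v, q2)
        have hv2 := hgval (v, x)
        unfold move
        simp only [List.length_cons, List.length_nil]
        split_ifs <;> omega
      · intro x
        have hx := hqdom.2 (v, x)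
        rw [nbr_lex] at hx
        have hz := hextsum (move g (v, q2) (v, c)) (by
          intro u hu c'
          unfold move
          have hne1 : ((u : α), c') ≠ (v, c) := by
            intro hcon
            exact hu.ne' (congrArg Prod.fst hcon)
          have hne2 : ((u : α), c') ≠ (v, q2) := by
            intro hcon
            exact hu.ne' (congrArg Prod.fst hcon)
          rw [if_neg hne1, if_neg hne2]
          exact hextz u hu c')
        rw [hz, zero_add] at hx
        have hptw : ∀ y, move g (v, q2) (v, c) (v, y) = move (fun b => g (v, b)) q2 c y := by
          intro y
          unfold move
          by_cases hy1 : y = c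
          · simp [hy1]
          · by_cases hy2 : y = q2
            · simp [hy1, hy2]
            · simp [hy1, hy2]
        simp only [hptw] at hx
        exact hx
    have hle2 : secWDomNum H [1, 0] ≤ 2 := by
      refine Nat.sInf_le ⟨fun c => g (v, c), hsec, ?_⟩
      show weight (fun c => g (v, c)) = 2
      unfold weight
      exact hwv2
    omega
  -- Assemble the dominating function on G
  set f : α → ℕ := fun u => max (f0 u) (if Bumped G hG w u then 1 else 0) with hfdef
  have hf0le2 : ∀ u, f0 u ≤ 2 := by
    intro u
    simp only [hf0]
    omega
  refine ⟨f, ⟨?_, ?_⟩, ?_⟩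
  · intro u
    have := hf0le2 u
    simp only [hfdef, List.length_cons, List.length_nil]
    split_ifs <;> omega
  · intro v
    by_cases hwv : w v ≤ 1
    · have hfv : f v = 0 ∨ f v = 1 := by
        have : f0 v ≤ 1 := by simp only [hf0]; omega
        simp only [hfdef]
        split_ifs <;> omega
      have hsum : 2 ≤ ∑ u ∈ univ.filter (fun u => G.Adj v u), f u :=
        le_trans (hA v hwv) (Finset.sum_le_sum (fun u _ => by
          simp only [hfdef]
          exact le_max_left _ _))
      have hnb : 2 ≤ nbrSum G f v := by
        unfold nbrSum
        exact hsum
      rcases hfv with h | h <;> rw [h] <;> exact hnb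
    · push_neg at hwv
      have hf0v : f0 v = 2 := by simp only [hf0]; omega
      have hfv : f v = 2 := by
        simp only [hfdef, hf0v]
        split_ifs <;> omega
      rw [hfv]
      show 1 ≤ nbrSum G f v
      by_cases hex : ∃ u, G.Adj v u ∧ 1 ≤ w u
      · obtain ⟨u, hu, hwu⟩ := hex
        have h1u : 1 ≤ f u := by
          simp only [hfdef, hf0]
          have : 1 ≤ min 2 (w u) := by omega
          omega
        exact le_trans h1u (le_nbrSum G f hu)
      · push_neg at hex
        have hext : ∀ u, G.Adj v u → w u = 0 := fun u hu => by
          have := hex u hu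
          omega
        have hrich : RichIso G w v := ⟨hB v (by omega) hext, hext⟩
        have hu := (hG v).choose_spec
        have hbu : Bumped G hG w ((hG v).choose) := ⟨v, hrich, rfl⟩
        have h1u : 1 ≤ f ((hG v).choose) := by
          simp only [hfdef, if_pos hbu]
          omega
        exact le_trans h1u (le_nbrSum G f hu)
  · -- weight bound
    have hwsum : weight g = ∑ v, w v := by
      unfold weight
      rw [Fintype.sum_prod_type]
    set B := univ.filter (fun v => Bumped G hG w v ∧ f0 v = 0) with hBdef
    set R := univ.filter (RichIso G w) with hRdef
    have hstep1 : weight f ≤ (∑ v, f0 v) + B.card := by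
      unfold weight
      have hpt : ∀ v, f v ≤ f0 v + (if Bumped G hG w v ∧ f0 v = 0 then 1 else 0) := by
        intro v
        by_cases hb : Bumped G hG w v
        · by_cases h0 : f0 v = 0
          · have he : (if Bumped G hG w v ∧ f0 v = 0 then 1 else 0) = 1 := if_pos ⟨hb, h0⟩
            rw [he]
            simp only [hfdef, if_pos hb, h0]
            omega
          · simp only [hfdef, if_pos hb,
              if_neg (show ¬(Bumped G hG w v ∧ f0 v = 0) from fun hcon => h0 hcon.2)]
            omega
        · simp only [hfdef, if_neg hb,
            if_neg (show ¬(Bumped G hG w v ∧ f0 v = 0) from fun hcon => hb hcon.1)]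
          omega
      calc ∑ v, f v
          ≤ ∑ v, (f0 v + (if Bumped G hG w v ∧ f0 v = 0 then 1 else 0)) :=
            Finset.sum_le_sum (fun v _ => hpt v)
        _ = (∑ v, f0 v) + ∑ v, (if Bumped G hG w v ∧ f0 v = 0 then 1 else 0) := by
            rw [Finset.sum_add_distrib]
        _ = (∑ v, f0 v) + B.card := by
            rw [hBdef, Finset.card_filter]
    have hcard : B.card ≤ R.card := by
      apply Finset.card_le_card_of_injOn
        (fun v => if h : Bumped G hG w v then (Exists.choose h) else v)
      · intro v hv
        have hbv : Bumped G hG w v := ((Finset.mem_filter.1 hv).2).1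
        simp only [dif_pos hbv]
        exact Finset.mem_filter.2 ⟨mem_univ _, (Exists.choose_spec hbv).1⟩
      · intro v1 hv1 v2 hv2 heq
        have hb1 : Bumped G hG w v1 := ((Finset.mem_filter.1 hv1).2).1
        have hb2 : Bumped G hG w v2 := ((Finset.mem_filter.1 hv2).2).1
        simp only [dif_pos hb1, dif_pos hb2] at heq
        have e1 := (Exists.choose_spec hb1).2
        have e2 := (Exists.choose_spec hb2).2
        rw [e1, e2, heq]
    have hstep2 : (∑ v, f0 v) + R.card ≤ ∑ v, w v := by
      have hterm : ∀ v, f0 v + (if RichIso G w v then 1 else 0) ≤ w v := by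
        intro v
        by_cases hr : RichIso G w v
        · have h3 := hr.1
          simp only [hf0, if_pos hr]
          omega
        · simp only [hf0, if_neg hr]
          omega
      calc (∑ v, f0 v) + R.card
          = (∑ v, f0 v) + ∑ v, (if RichIso G w v then 1 else 0) := by
            rw [hRdef, Finset.card_filter]
        _ = ∑ v, (f0 v + (if RichIso G w v then 1 else 0)) := by
            rw [Finset.sum_add_distrib]
        _ ≤ ∑ v, w v := Finset.sum_le_sum (fun v _ => hterm v)
    rw [hwsum]
    omega

end SecureW

namespace SecureW
open Finset
open scoped Classical
set_option linter.unusedSectionVars false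

variable {α β : Type*} [Fintype α] [Fintype β]

lemma sec_one (G : SimpleGraph α) : IsSecureWDom G [1, 0] (fun _ => 1) := by
  refine ⟨⟨fun v => by norm_num, fun v => ?_⟩, fun v h => absurd h one_ne_zero⟩
  exact Nat.zero_le _

lemma wdom222 (G : SimpleGraph α) (hG : NoIsolated G) :
    IsWDom G [2, 2, 2] (fun _ => 2) := by
  refine ⟨fun v => by norm_num, fun v => ?_⟩
  obtain ⟨u, hu⟩ := hG v
  have h := le_nbrSum G (fun _ => 2) hu
  calc ([2, 2, 2] : List ℕ).getD ((fun _ => (2 : ℕ)) v) 0 = 2 := rfl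
    _ ≤ _ := h

end SecureW

open SecureW in
theorem stmt_6 {α β : Type*} [Fintype α] [Fintype β]
    (G : SimpleGraph α) (H : SimpleGraph β)
    (hG : NoIsolated G) (hH : Nontrivial β)
    (h1 : secWDomNum H [1, 0] = 3) (h2 : domNum H = 3) :
    wDomNum G [2, 2, 1] ≤ secWDomNum (lexProd G H) [1, 0] ∧
      secWDomNum (lexProd G H) [1, 0] ≤ wDomNum G [2, 2, 2] := by
  constructor
  · have hne : {k | ∃ f, IsSecureWDom (lexProd G H) [1, 0] f ∧ weight f = k}.Nonempty :=
      ⟨_, ⟨fun _ => 1, sec_one _, rfl⟩⟩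
    obtain ⟨g', hg', hwg⟩ := Nat.sInf_mem hne
    obtain ⟨f, hf, hwf⟩ := lb_aux G H hG hH h1 h2 g' hg'
    have hle : wDomNum G [2, 2, 1] ≤ weight f := Nat.sInf_le ⟨f, hf, rfl⟩
    have hfin : weight g' = secWDomNum (lexProd G H) [1, 0] := hwg
    omega
  · have hne : {k | ∃ f, IsWDom G [2, 2, 2] f ∧ weight f = k}.Nonempty :=
      ⟨_, ⟨fun _ => 2, wdom222 G hG, rfl⟩⟩
    obtain ⟨fm, hfm, hwfm⟩ := Nat.sInf_mem hne
    obtain ⟨g, hgsec, hwg⟩ := ub_aux G H hH fm hfm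
    have hle : secWDomNum (lexProd G H) [1, 0] ≤ weight g := Nat.sInf_le ⟨g, hgsec, rfl⟩
    have hfin : weight fm = wDomNum G [2, 2, 2] := hwfm
    omega
end

section
/- For any graph G with no isolated vertex and any noncomplete graph H with γ(H)=1, the weak Roman domination number of the lexicographic product satisfies γ^s_{(1,0,0)}(G∘H) = γ_{(2,1,0)}(G). -/
/-!
For the upper bound, put a `(2,1,0)`-dominating function `g` of `G` on the layer `G × {b₀}` of a
universal vertex `b₀` of `H`. Removing one unit from any column of `g` leaves a function whose
support still dominates `G`, so an undefended vertex `(v, b)` can always take a guard: from its own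
column if that is occupied, otherwise from a neighbouring one.

For the lower bound, cap the column sums of a secure `(1,0,0)`-function `f` at `2`. Take `b₁, b₂`
non-adjacent in `H`. If `(v, b₁)` is empty, say, moving a guard there keeps the weight of
`N[v] × V(H)`, and `(v, b₂)` must still be defended from a second vertex of `N[v] × V(H)`. So every
`N[v] × V(H)` carries weight at least `2`, which is the `(2,1,0)` condition for the capped column
sums.
-/

open Finset

namespace SecureW

section FinsetSum

variable {ι : Type*} {s : Finset ι} {f : ι → ℕ}

theorem two_le_sum_of_pos_of_pos {i j : ι} (hi : i ∈ s) (hj : j ∈ s) (hij : i ≠ j)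
    (hfi : 0 < f i) (hfj : 0 < f j) : 2 ≤ ∑ x ∈ s, f x := by
  classical
  calc 2 ≤ f i + f j := by omega
    _ = ∑ x ∈ {i, j}, f x := (sum_pair hij).symm
    _ ≤ ∑ x ∈ s, f x := sum_le_sum_of_subset (insert_subset hi (singleton_subset_iff.2 hj))

theorem sum_le_sum_update_pred_add_one [DecidableEq ι] (s : Finset ι) (f : ι → ℕ) (i : ι) :
    ∑ x ∈ s, f x ≤ ∑ x ∈ s, Function.update f i (f i - 1) x + 1 := by
  have hpt : ∀ x, f x ≤ Function.update f i (f i - 1) x + if x = i then 1 else 0 := by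
    intro x
    by_cases hx : x = i
    · subst hx; simp; omega
    · simp [hx]
  calc ∑ x ∈ s, f x ≤ ∑ x ∈ s, (Function.update f i (f i - 1) x + if x = i then 1 else 0) :=
        sum_le_sum fun x _ => hpt x
    _ ≤ ∑ x ∈ s, Function.update f i (f i - 1) x + 1 := by
        rw [sum_add_distrib, sum_ite_eq']
        split_ifs <;> omega

theorem sum_move [DecidableEq ι] {u v : ι} (hu : u ∈ s) (hv : v ∈ s) (huv : u ≠ v)
    (hfu : 0 < f u) (hfv : f v = 0) : ∑ x ∈ s, move f u v x = ∑ x ∈ s, f x := by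
  have hpt : ∀ x, (move f u v x + if x = u then 1 else 0) = f x + if x = v then 1 else 0 := by
    intro x
    unfold move
    split_ifs <;> subst_vars <;> omega
  have hsum := sum_congr rfl fun x (_ : x ∈ s) => hpt x
  rw [sum_add_distrib, sum_add_distrib, sum_ite_eq', sum_ite_eq', if_pos hu, if_pos hv] at hsum
  omega

theorem move_lt [DecidableEq ι] {n : ℕ} (hn : 1 < n) (hf : ∀ x, f x < n) (u v x : ι) :
    move f u v x < n := by
  have := hf u
  have := hf x
  unfold move
  split_ifs <;> omega

theorem min_sum_le_sum_min (k : ℕ) (s : Finset ι) (f : ι → ℕ) :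
    min k (∑ i ∈ s, f i) ≤ ∑ i ∈ s, min k (f i) := by
  classical
  induction s using Finset.induction_on with
  | empty => simp
  | insert a s ha ih =>
    rw [sum_insert ha, sum_insert ha]
    omega

end FinsetSum

theorem sInf_le_sInf_of_forall_exists_le {S T : Set ℕ} (hS : S.Nonempty)
    (h : ∀ a ∈ S, ∃ b ∈ T, b ≤ a) : sInf T ≤ sInf S := by
  obtain ⟨b, hb, hle⟩ := h _ (Nat.sInf_mem hS)
  exact (Nat.sInf_le hb).trans hle

section ClosedNbrs

variable {V : Type*} [Fintype V] {G : SimpleGraph V}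

open scoped Classical in
noncomputable def closedNbrs (G : SimpleGraph V) (v : V) : Finset V :=
  insert v (univ.filter fun u => G.Adj v u)

theorem mem_closedNbrs {u v : V} : u ∈ closedNbrs G v ↔ u = v ∨ G.Adj v u := by
  simp [closedNbrs]

theorem self_mem_closedNbrs (v : V) : v ∈ closedNbrs G v :=
  mem_closedNbrs.2 (Or.inl rfl)

theorem add_nbrSum_eq_sum_closedNbrs (f : V → ℕ) (v : V) :
    f v + nbrSum G f v = ∑ u ∈ closedNbrs G v, f u := by
  classical
  rw [closedNbrs, sum_insert (by simp), nbrSum]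

theorem getD_one_zero (n : ℕ) : [1, 0].getD n 0 = 1 - n := by
  rcases n with _ | _ | n <;> simp

theorem getD_one_zero_zero (n : ℕ) : [1, 0, 0].getD n 0 = 1 - n := by
  rcases n with _ | _ | _ | n <;> simp

theorem getD_two_one_zero (n : ℕ) : [2, 1, 0].getD n 0 = 2 - n := by
  rcases n with _ | _ | _ | n <;> simp

theorem isWDom_iff_le_sum_closedNbrs {ws : List ℕ} {k : ℕ} (hws : ∀ n, ws.getD n 0 = k - n)
    (f : V → ℕ) :
    IsWDom G ws f ↔ (∀ v, f v < ws.length) ∧ ∀ v, k ≤ ∑ u ∈ closedNbrs G v, f u := by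
  simp only [IsWDom, hws, Nat.sub_le_iff_le_add', add_nbrSum_eq_sum_closedNbrs]

theorem isWDom_iff_exists_pos_closedNbrs {ws : List ℕ} (hws : ∀ n, ws.getD n 0 = 1 - n)
    (f : V → ℕ) :
    IsWDom G ws f ↔ (∀ v, f v < ws.length) ∧ ∀ v, ∃ u ∈ closedNbrs G v, 0 < f u := by
  simp only [isWDom_iff_le_sum_closedNbrs hws, Nat.one_le_iff_ne_zero, ← Nat.pos_iff_ne_zero,
    sum_pos_iff]

theorem IsWDom.exists_pos_update_pred [DecidableEq V] {g : V → ℕ} (hg : IsWDom G [2, 1, 0] g)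
    (u v : V) : ∃ w ∈ closedNbrs G v, 0 < Function.update g u (g u - 1) w := by
  have h2 := ((isWDom_iff_le_sum_closedNbrs getD_two_one_zero g).1 hg).2 v
  have := sum_le_sum_update_pred_add_one (closedNbrs G v) g u
  exact sum_pos_iff.1 (by omega)

end ClosedNbrs

section LexProd

variable {α β : Type*} [Fintype α] [Fintype β] {G : SimpleGraph α} {H : SimpleGraph β}

def layer [DecidableEq β] (b₀ : β) (g : α → ℕ) : α × β → ℕ :=
  fun p => if p.2 = b₀ then g p.1 else 0

def cappedColSum (f : α × β → ℕ) : α → ℕ :=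
  fun v => min 2 (∑ b, f (v, b))

theorem weight_layer [DecidableEq β] (b₀ : β) (g : α → ℕ) : weight (layer b₀ g) = weight g := by
  simp [weight, layer, Fintype.sum_prod_type]

theorem weight_cappedColSum_le (f : α × β → ℕ) : weight (cappedColSum f) ≤ weight f := by
  rw [weight, weight, Fintype.sum_prod_type]
  exact sum_le_sum fun v _ => min_le_right _ _

theorem closedNbrs_lexProd_subset (v : α) (b : β) :
    closedNbrs (lexProd G H) (v, b) ⊆ closedNbrs G v ×ˢ univ := by
  rintro ⟨w, c⟩ h
  simp only [mem_closedNbrs, mem_product, mem_univ, and_true, lexProd, Prod.mk.injEq] at h ⊢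
  tauto

theorem isWDom_lexProd_of_pos_on_layer {b₀ : β} (hb₀ : ∀ b, b ≠ b₀ → H.Adj b b₀) {g : α → ℕ}
    (hg : ∀ v, ∃ u ∈ closedNbrs G v, 0 < g u) {F : α × β → ℕ} (hF₃ : ∀ p, F p < 3)
    (hF : ∀ v, 0 < g v → 0 < F (v, b₀)) : IsWDom (lexProd G H) [1, 0, 0] F := by
  rw [isWDom_iff_exists_pos_closedNbrs getD_one_zero_zero]
  refine ⟨hF₃, fun ⟨v, b⟩ => ?_⟩
  obtain ⟨u, hu, hgu⟩ := hg v
  refine ⟨(u, b₀), mem_closedNbrs.2 ?_, hF u hgu⟩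
  rcases mem_closedNbrs.1 hu with rfl | hvu
  · by_cases hb : b = b₀
    · exact Or.inl (by rw [hb])
    · exact Or.inr (Or.inr ⟨rfl, hb₀ b hb⟩)
  · exact Or.inr (Or.inl hvu)

theorem isSecureWDom_layer [DecidableEq β] {b₀ : β} (hb₀ : ∀ b, b ≠ b₀ → H.Adj b b₀) {g : α → ℕ}
    (hg : IsWDom G [2, 1, 0] g) : IsSecureWDom (lexProd G H) [1, 0, 0] (layer b₀ g) := by
  classical
  obtain ⟨hg₃, hg₂⟩ := (isWDom_iff_le_sum_closedNbrs getD_two_one_zero g).1 hg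
  have hdom : ∀ v, ∃ u ∈ closedNbrs G v, 0 < g u := fun v => sum_pos_iff.1 (by linarith [hg₂ v])
  have hlayer₃ : ∀ p, layer b₀ g p < 3 := fun p => by
    unfold layer
    split_ifs
    exacts [hg₃ p.1, by omega]
  refine ⟨isWDom_lexProd_of_pos_on_layer hb₀ hdom hlayer₃ fun v hv => by simpa [layer] using hv,
    ?_⟩
  rintro ⟨v, b⟩ hvb
  obtain ⟨u, hu, hgu⟩ := hdom v
  refine ⟨(u, b₀), ?_, by simpa [layer] using hgu, ?_⟩
  · rcases mem_closedNbrs.1 hu with rfl | hvu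
    · refine Or.inr ⟨rfl, hb₀ b ?_⟩
      rintro rfl
      simp only [layer, ↓reduceIte] at hvb
      omega
    · exact Or.inl hvu
  · refine isWDom_lexProd_of_pos_on_layer hb₀ (hg.exists_pos_update_pred u)
      (fun p => by convert move_lt (by norm_num) hlayer₃ (u, b₀) (v, b) p) fun w hw => ?_
    simp only [move, layer, Function.update_apply, Prod.mk.injEq, and_true] at hw ⊢
    split_ifs at hw ⊢ <;> omega

theorem IsSecureWDom.two_le_sum_columns_of_eq_zero {f : α × β → ℕ}
    (hf : IsSecureWDom (lexProd G H) [1, 0, 0] f) {v : α} {b' b'' : β} (hne : b'' ≠ b')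
    (hnadj : ¬ H.Adj b'' b') (hfv : f (v, b') = 0) :
    2 ≤ ∑ p ∈ closedNbrs G v ×ˢ univ, f p := by
  classical
  have hsub := closedNbrs_lexProd_subset (G := G) (H := H)
  obtain ⟨p, hp, hfp, hmove⟩ := hf.2 (v, b') hfv
  obtain ⟨q, hq, hmq⟩ :=
    ((isWDom_iff_exists_pos_closedNbrs getD_one_zero_zero _).1 hmove).2 (v, b'')
  have hqv : q ≠ (v, b') := by
    rintro rfl
    rcases mem_closedNbrs.1 hq with h | h | ⟨-, h⟩
    · exact hne (Prod.mk.inj h).2.symm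
    · exact G.irrefl h
    · exact hnadj h
  have hp' : p ∈ closedNbrs G v ×ˢ univ := hsub v b' (mem_closedNbrs.2 (Or.inr hp))
  have hv' : (v, b') ∈ closedNbrs G v ×ˢ univ := hsub v b' (self_mem_closedNbrs _)
  rw [← sum_move hp' hv' ((lexProd G H).ne_of_adj hp).symm hfp hfv]
  exact two_le_sum_of_pos_of_pos (hsub v b'' hq) hv' hqv (by convert hmq) (by simp [move])

theorem IsSecureWDom.two_le_sum_columns {f : α × β → ℕ}
    (hf : IsSecureWDom (lexProd G H) [1, 0, 0] f) {b₁ b₂ : β} (hb : b₁ ≠ b₂)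
    (hnadj : ¬ H.Adj b₁ b₂) (v : α) : 2 ≤ ∑ p ∈ closedNbrs G v ×ˢ univ, f p := by
  by_cases h₁ : f (v, b₁) = 0
  · exact hf.two_le_sum_columns_of_eq_zero hb.symm (fun h => hnadj h.symm) h₁
  by_cases h₂ : f (v, b₂) = 0
  · exact hf.two_le_sum_columns_of_eq_zero hb hnadj h₂
  have hmem : ∀ b : β, (v, b) ∈ closedNbrs G v ×ˢ univ := fun b =>
    mem_product.2 ⟨self_mem_closedNbrs v, mem_univ b⟩
  exact two_le_sum_of_pos_of_pos (hmem b₁) (hmem b₂) (by simpa using hb)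
    (Nat.pos_of_ne_zero h₁) (Nat.pos_of_ne_zero h₂)

theorem IsSecureWDom.isWDom_cappedColSum {f : α × β → ℕ}
    (hf : IsSecureWDom (lexProd G H) [1, 0, 0] f) {b₁ b₂ : β} (hb : b₁ ≠ b₂)
    (hnadj : ¬ H.Adj b₁ b₂) : IsWDom G [2, 1, 0] (cappedColSum f) := by
  rw [isWDom_iff_le_sum_closedNbrs getD_two_one_zero]
  refine ⟨fun v => by simp only [cappedColSum, List.length]; omega, fun v => ?_⟩
  calc 2 ≤ min 2 (∑ p ∈ closedNbrs G v ×ˢ univ, f p) :=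
        le_min le_rfl (hf.two_le_sum_columns hb hnadj v)
    _ = min 2 (∑ w ∈ closedNbrs G v, ∑ b, f (w, b)) := by rw [sum_product]
    _ ≤ ∑ w ∈ closedNbrs G v, cappedColSum f w := min_sum_le_sum_min _ _ _

end LexProd

section Existence

variable {V : Type*} [Fintype V] (G : SimpleGraph V)

theorem isWDom_two_one_zero_const_two : IsWDom G [2, 1, 0] fun _ => 2 := by
  rw [isWDom_iff_le_sum_closedNbrs getD_two_one_zero]
  refine ⟨fun _ => by simp, fun v => ?_⟩
  exact single_le_sum (f := fun _ => 2) (by simp) (self_mem_closedNbrs v)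

theorem isSecureWDom_one_zero_zero_const_one : IsSecureWDom G [1, 0, 0] fun _ => 1 := by
  refine ⟨(isWDom_iff_exists_pos_closedNbrs getD_one_zero_zero _).2 ?_, fun _ h => ?_⟩
  · exact ⟨fun _ => by simp, fun v => ⟨v, self_mem_closedNbrs v, one_pos⟩⟩
  · exact absurd h one_ne_zero

end Existence

theorem exists_forall_adj_of_domNum_eq_one {V : Type*} [Fintype V] {G : SimpleGraph V}
    (h : domNum G = 1) : ∃ v₀, ∀ v, v ≠ v₀ → G.Adj v v₀ := by
  obtain ⟨f, hf, hw⟩ : ∃ f, IsWDom G [1, 0] f ∧ weight f = 1 := by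
    have hmem := Nat.sInf_mem (Nat.nonempty_of_pos_sInf (show 0 < domNum G by omega))
    rw [domNum, wDomNum] at h
    rwa [h] at hmem
  obtain ⟨v₀, -, hv₀⟩ := sum_pos_iff.1 (show 0 < weight f by omega)
  have huniq : ∀ v, 0 < f v → v = v₀ := fun v hv => by
    by_contra hne
    have := two_le_sum_of_pos_of_pos (mem_univ v) (mem_univ v₀) hne hv hv₀
    rw [← weight, hw] at this
    omega
  refine ⟨v₀, fun v hv => ?_⟩
  obtain ⟨u, hu, hfu⟩ := ((isWDom_iff_exists_pos_closedNbrs getD_one_zero _).1 hf).2 v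
  rcases mem_closedNbrs.1 hu with rfl | hvu
  · exact absurd (huniq u hfu) hv
  · exact huniq u hfu ▸ hvu

end SecureW

open SecureW in
theorem stmt_14_general {α β : Type*} [Fintype α] [Fintype β]
    (G : SimpleGraph α) (H : SimpleGraph β)
    (hH : H ≠ ⊤) (h1 : domNum H = 1) :
    secWDomNum (lexProd G H) [1, 0, 0] = wDomNum G [2, 1, 0] := by
  classical
  obtain ⟨b₀, hb₀⟩ := exists_forall_adj_of_domNum_eq_one h1
  obtain ⟨b₁, b₂, hb, hnadj⟩ : ∃ b₁ b₂, b₁ ≠ b₂ ∧ ¬ H.Adj b₁ b₂ := by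
    by_contra! hall
    refine hH (SimpleGraph.ext (funext₂ fun b c => propext ?_))
    rw [SimpleGraph.top_adj]
    exact ⟨SimpleGraph.Adj.ne, hall b c⟩
  apply le_antisymm
  · refine sInf_le_sInf_of_forall_exists_le ⟨_, _, isWDom_two_one_zero_const_two G, rfl⟩ ?_
    rintro _ ⟨g, hg, rfl⟩
    exact ⟨_, ⟨_, isSecureWDom_layer hb₀ hg, rfl⟩, (weight_layer b₀ g).le⟩
  · refine sInf_le_sInf_of_forall_exists_le
      ⟨_, _, isSecureWDom_one_zero_zero_const_one (lexProd G H), rfl⟩ ?_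
    rintro _ ⟨f, hf, rfl⟩
    exact ⟨_, ⟨_, hf.isWDom_cappedColSum hb hnadj, rfl⟩, weight_cappedColSum_le f⟩

open SecureW in
theorem stmt_14 {α β : Type*} [Fintype α] [Fintype β]
    (G : SimpleGraph α) (H : SimpleGraph β)
    (hG : NoIsolated G) (hH : H ≠ ⊤) (h1 : domNum H = 1) :
    secWDomNum (lexProd G H) [1, 0, 0] = wDomNum G [2, 1, 0] :=
  stmt_14_general G H hH h1
end
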